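/- arXiv:2402.14691 — 8 statements merged into one kernel-verified Lean document; each statement's English description precedes it below -/
import Mathlib

section
/- Let Δt>0, L≥0 with Δt·L ≤ 1/8, and N_T≥1. For each n∈{1,…,N_T} let uⁿ:[a,b]→ℝ be differentiable with uⁿ(a)=uⁿ(b)=0 and |（uⁿ)'(x)| ≤ L for all x∈[a,b]; set Xⁿ(x)=x−Δt·uⁿ(x) and γⁿ(x)=1−Δt·(uⁿ)'(x). Let φ_h⁰,…,φ_h^{N_T}:[a,b]→ℝ and fⁿ:[a,b]→ℝ be Lebesgue integrable and gⁿ:{a,b}→ℝ, and suppose that for each n∈{1,…,N_T} the first-order Lagrange–Galerkin scheme tested with the constant function 1 holds: ∫_a^b ( φ_hⁿ(x) − φ_h^{n−1}(Xⁿ(x))·γⁿ(x) ) dx = Δt·( ∫_a^b fⁿ(x) dx + gⁿ(a) + gⁿ(b) ). Then for every n∈{0,…,N_T}: ∫_a^b φ_hⁿ(x) dx = ∫_a^b φ_h⁰(x) dx + Δt·Σ_{i=1}^{n} ( ∫_a^b fⁱ(x) dx + gⁱ(a) + gⁱ(b) ), i.e. the scheme preserves the total mass. -/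
open MeasureTheory

lemma LG_change_of_var (a b Δt L : ℝ) (hab : a < b) (hΔt : 0 < Δt)
    (hΔtL : Δt * L ≤ 1 / 8)
    (u : ℝ → ℝ) (hu : Differentiable ℝ u) (hua : u a = 0) (hub : u b = 0)
    (hLb : ∀ x ∈ Set.Icc a b, |deriv u x| ≤ L)
    (φ : ℝ → ℝ) (hφ : IntervalIntegrable φ volume a b) :
    IntervalIntegrable (fun x => φ (x - Δt * u x) * (1 - Δt * deriv u x)) volume a b ∧
    (∫ x in a..b, φ (x - Δt * u x) * (1 - Δt * deriv u x)) = ∫ x in a..b, φ x := by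
  set X : ℝ → ℝ := fun x => x - Δt * u x with hXdef
  set γ : ℝ → ℝ := fun x => 1 - Δt * deriv u x with hγdef
  have hX' : ∀ x, HasDerivAt X (γ x) x := by
    intro x
    exact (hasDerivAt_id x).sub (((hu x).hasDerivAt).const_mul Δt)
  have hγpos : ∀ x ∈ Set.Icc a b, 0 < γ x := by
    intro x hx
    have h := hLb x hx
    have h2 : deriv u x ≤ L := (abs_le.mp h).2
    have h1 : Δt * deriv u x ≤ Δt * L := mul_le_mul_of_nonneg_left h2 hΔt.le
    simp only [hγdef]
    linarith
  have hXcont : Continuous X := by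
    exact continuous_id.sub (continuous_const.mul hu.continuous)
  have hmono : StrictMonoOn X (Set.Icc a b) := by
    apply strictMonoOn_of_deriv_pos (convex_Icc a b) hXcont.continuousOn
    intro x hx
    rw [interior_Icc] at hx
    rw [(hX' x).deriv]
    exact hγpos x (Set.Ioo_subset_Icc_self hx)
  have hXa : X a = a := by simp [hXdef, hua]
  have hXb : X b = b := by simp [hXdef, hub]
  have himg : X '' Set.Icc a b = Set.Icc a b := by
    apply Set.Subset.antisymm
    · rintro _ ⟨x, hx, rfl⟩
      constructor
      · calc a = X a := hXa.symm
          _ ≤ X x := hmono.monotoneOn (Set.left_mem_Icc.mpr hab.le) hx hx.1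
      · calc X x ≤ X b := hmono.monotoneOn hx (Set.right_mem_Icc.mpr hab.le) hx.2
          _ = b := hXb
    · have := intermediate_value_Icc hab.le hXcont.continuousOn
      rw [hXa, hXb] at this
      exact this
  have hder : ∀ x ∈ Set.Icc a b, HasDerivWithinAt X (γ x) (Set.Icc a b) x :=
    fun x _ => (hX' x).hasDerivWithinAt
  have hinj : Set.InjOn X (Set.Icc a b) := hmono.injOn
  have hφIcc : IntegrableOn φ (Set.Icc a b) :=
    (intervalIntegrable_iff_integrableOn_Icc_of_le hab.le).mp hφ
  have hcongr : Set.EqOn (fun x => |γ x| • φ (X x)) (fun x => φ (X x) * γ x) (Set.Icc a b) := by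
    intro x hx
    simp [abs_of_pos (hγpos x hx), mul_comm]
  have hIntIcc : IntegrableOn (fun x => |γ x| • φ (X x)) (Set.Icc a b) := by
    apply (MeasureTheory.integrableOn_image_iff_integrableOn_abs_deriv_smul
      measurableSet_Icc hder hinj φ).mp
    rwa [himg]
  have hIntIcc' : IntegrableOn (fun x => φ (X x) * γ x) (Set.Icc a b) :=
    hIntIcc.congr_fun hcongr measurableSet_Icc
  have hIntervalInt : IntervalIntegrable (fun x => φ (X x) * γ x) volume a b :=
    (intervalIntegrable_iff_integrableOn_Icc_of_le hab.le).mpr hIntIcc'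
  have hint_eq := MeasureTheory.integral_image_eq_integral_abs_deriv_smul
    measurableSet_Icc hder hinj φ
  rw [himg] at hint_eq
  have hsetint : (∫ x in Set.Icc a b, |γ x| • φ (X x)) = ∫ x in Set.Icc a b, φ (X x) * γ x :=
    MeasureTheory.setIntegral_congr_fun measurableSet_Icc hcongr
  refine ⟨hIntervalInt, ?_⟩
  rw [intervalIntegral.integral_of_le hab.le, intervalIntegral.integral_of_le hab.le,
    ← MeasureTheory.integral_Icc_eq_integral_Ioc, ← MeasureTheory.integral_Icc_eq_integral_Ioc,
    ← hsetint, ← hint_eq]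

/-- **Mass preservation of the first-order Lagrange–Galerkin scheme.**
If for each time step the scheme tested with the constant function `1` holds,
then the total mass is conserved up to the accumulated sources. -/
theorem first_order_LG_mass_preservation
    (a b Δt L : ℝ) (NT : ℕ)
    (hab : a < b) (hΔt : 0 < Δt) (hL : 0 ≤ L) (hΔtL : Δt * L ≤ 1 / 8) (hNT : 1 ≤ NT)
    (u : ℕ → ℝ → ℝ)
    (hu : ∀ n, 1 ≤ n → n ≤ NT → Differentiable ℝ (u n) ∧ u n a = 0 ∧ u n b = 0 ∧
      ∀ x ∈ Set.Icc a b, |deriv (u n) x| ≤ L)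
    (φ f : ℕ → ℝ → ℝ) (g : ℕ → ℝ → ℝ)
    (hφint : ∀ n ≤ NT, IntervalIntegrable (φ n) volume a b)
    (hfint : ∀ n, 1 ≤ n → n ≤ NT → IntervalIntegrable (f n) volume a b)
    (hscheme : ∀ n, 1 ≤ n → n ≤ NT →
      (∫ x in a..b,
          (φ n x - φ (n - 1) (x - Δt * u n x) * (1 - Δt * deriv (u n) x)))
        = Δt * ((∫ x in a..b, f n x) + g n a + g n b)) :
    ∀ n ≤ NT,
      (∫ x in a..b, φ n x)
        = (∫ x in a..b, φ 0 x)
          + Δt * ∑ i ∈ Finset.Icc 1 n, ((∫ x in a..b, f i x) + g i a + g i b) := by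
  intro n
  induction n with
  | zero => intro _; simp
  | succ n ih =>
    intro hle
    have h1 : 1 ≤ n + 1 := Nat.succ_le_succ (Nat.zero_le n)
    obtain ⟨hdiff, hua, hub, hLb⟩ := hu (n + 1) h1 hle
    obtain ⟨hInt, hEq⟩ := LG_change_of_var a b Δt L hab hΔt hΔtL (u (n + 1)) hdiff hua hub hLb
      (φ n) (hφint n (Nat.le_of_succ_le hle))
    have hs := hscheme (n + 1) h1 hle
    simp only [Nat.add_sub_cancel] at hs
    rw [intervalIntegral.integral_sub (hφint (n + 1) hle) hInt] at hs
    have ihe := ih (Nat.le_of_succ_le hle)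
    rw [Finset.sum_Icc_succ_top h1, mul_add]
    linarith [hEq, hs, ihe]
end

section
/- Let P_k, P_{k+1}:ℝ→ℝ be the affine node trajectories P_k(t)=P_k⁰+w_k·t and P_{k+1}(t)=P_{k+1}⁰+w_{k+1}·t with real velocities w_k, w_{k+1}, let t∈ℝ be such that P_k(t)<P_{k+1}(t), and define the local hat functions ψ_k(x,t)=(P_{k+1}(t)−x)/(P_{k+1}(t)−P_k(t)) and ψ_{k+1}(x,t)=(x−P_k(t))/(P_{k+1}(t)−P_k(t)). Let φ:ℝ×ℝ→ℝ be any function. Then for every x∈ℝ the time derivatives ∂_tψ_k(x,t) and ∂_tψ_{k+1}(x,t) exist and φ(P_k(t),t)·∂_tψ_k(x,t) + φ(P_{k+1}(t),t)·∂_tψ_{k+1}(x,t) = −((φ(P_{k+1}(t),t)−φ(P_k(t),t))/(P_{k+1}(t)−P_k(t)))·( w_{k+1}·ψ_{k+1}(x,t) + w_k·ψ_k(x,t) ). -/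
/-- **Time derivative of the moving P1 hat functions (Lemma 1).**
With affine node trajectories `P_k(t) = P_k⁰ + w_k t`, `P_{k+1}(t) = P_{k+1}⁰ + w_{k+1} t`
and the local hat functions
`ψ_k(x,t) = (P_{k+1}(t) − x)/(P_{k+1}(t) − P_k(t))`,
`ψ_{k+1}(x,t) = (x − P_k(t))/(P_{k+1}(t) − P_k(t))`,
the time derivatives exist at any time `t` with `P_k(t) < P_{k+1}(t)` and
`φ(P_k(t),t)·∂_tψ_k + φ(P_{k+1}(t),t)·∂_tψ_{k+1}
  = −((φ(P_{k+1}(t),t) − φ(P_k(t),t))/(P_{k+1}(t) − P_k(t)))·(w_{k+1}ψ_{k+1} + w_kψ_k)`. -/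
theorem hat_time_derivative_identity
    (Pk0 Pk10 wk wk1 t : ℝ) (φ : ℝ → ℝ → ℝ)
    (hsep : Pk0 + wk * t < Pk10 + wk1 * t) :
    ∀ x : ℝ, ∃ d1 d2 : ℝ,
      HasDerivAt (fun s : ℝ =>
        (Pk10 + wk1 * s - x) / (Pk10 + wk1 * s - (Pk0 + wk * s))) d1 t ∧
      HasDerivAt (fun s : ℝ =>
        (x - (Pk0 + wk * s)) / (Pk10 + wk1 * s - (Pk0 + wk * s))) d2 t ∧
      φ (Pk0 + wk * t) t * d1 + φ (Pk10 + wk1 * t) t * d2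
        = -((φ (Pk10 + wk1 * t) t - φ (Pk0 + wk * t) t)
              / (Pk10 + wk1 * t - (Pk0 + wk * t)))
            * (wk1 * ((x - (Pk0 + wk * t)) / (Pk10 + wk1 * t - (Pk0 + wk * t)))
               + wk * ((Pk10 + wk1 * t - x) / (Pk10 + wk1 * t - (Pk0 + wk * t)))) := by
  intro x
  have hL : Pk10 + wk1 * t - (Pk0 + wk * t) ≠ 0 := ne_of_gt (by linarith)
  have hden : HasDerivAt (fun s : ℝ => Pk10 + wk1 * s - (Pk0 + wk * s)) (wk1 - wk) t := by
    have : HasDerivAt (fun s : ℝ => Pk10 + wk1 * s - (Pk0 + wk * s)) (wk1 - wk) t := by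
      simpa using (((hasDerivAt_id t).const_mul wk1).const_add Pk10).fun_sub
        (((hasDerivAt_id t).const_mul wk).const_add Pk0)
    exact this
  have hn1 : HasDerivAt (fun s : ℝ => Pk10 + wk1 * s - x) wk1 t := by
    simpa using (((hasDerivAt_id t).const_mul wk1).const_add Pk10).sub_const x
  have hn2 : HasDerivAt (fun s : ℝ => x - (Pk0 + wk * s)) (-wk) t := by
    simpa using (HasDerivAt.const_sub x (((hasDerivAt_id t).const_mul wk).const_add Pk0))
  have h1 := hn1.div hden hL
  have h2 := hn2.div hden hL
  refine ⟨_, _, h1, h2, ?_⟩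
  field_simp
  ring
end

section
/- Let a<b, Δt>0 and L≥0 with Δt·L ≤ 1/4. Let u:[a,b]→ℝ be differentiable with u(a)=u(b)=0 and |u'(x)| ≤ L for all x∈[a,b], and set X(x)=x−Δt·u(x). Then for every Lebesgue-measurable ψ:[a,b]→ℝ: ∫_a^b ψ(X(x))² dx ≤ (1+2·L·Δt) · ∫_a^b ψ(y)² dy. -/
open MeasureTheory Set

/-- One-dimensional lintegral change of variables. -/
theorem my_lintegral_image_eq {s : Set ℝ} {f f' : ℝ → ℝ}
    (hs : MeasurableSet s) (hf' : ∀ x ∈ s, HasDerivWithinAt f (f' x) s x)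
    (hf : Set.InjOn f s) (g : ℝ → ENNReal) :
    ∫⁻ x in f '' s, g x = ∫⁻ x in s, ENNReal.ofReal |f' x| * g (f x) := by
  simpa only [ContinuousLinearMap.det_toSpanSingleton] using
    lintegral_image_eq_lintegral_abs_det_fderiv_mul volume hs
      (fun x hx => (hf' x hx).hasFDerivWithinAt) hf g

/-- **L² bound for composition with the upwind map** `X(x) = x − Δt·u(x)`:
`‖ψ ∘ X‖_{L²(a,b)}² ≤ (1 + 2LΔt)·‖ψ‖_{L²(a,b)}²` when `Δt·L ≤ 1/4` and
`|u'| ≤ L` on `[a,b]` with `u` vanishing at the endpoints. -/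
theorem composite_L2_bound
    (a b Δt L : ℝ) (hab : a < b) (hΔt : 0 < Δt) (hL : 0 ≤ L) (hΔtL : Δt * L ≤ 1 / 4)
    (u : ℝ → ℝ) (hu : Differentiable ℝ u) (hua : u a = 0) (hub : u b = 0)
    (hu' : ∀ x ∈ Set.Icc a b, |deriv u x| ≤ L)
    (ψ : ℝ → ℝ) (hψ : Measurable ψ) :
    (∫ x in a..b, ψ (x - Δt * u x) ^ 2)
      ≤ (1 + 2 * L * Δt) * ∫ y in a..b, ψ y ^ 2 := by
  set X : ℝ → ℝ := fun x => x - Δt * u x with hX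
  set γ : ℝ → ℝ := fun x => 1 - Δt * deriv u x with hγ
  have hΔtL' : 0 ≤ Δt * L := mul_nonneg hΔt.le hL
  -- derivative of X
  have hXderiv : ∀ x : ℝ, HasDerivAt X (γ x) x := by
    intro x
    exact (hasDerivAt_id' x).sub (((hu x).hasDerivAt).const_mul Δt)
  -- bounds on γ on [a,b]
  have hγlow : ∀ x ∈ Icc a b, 1 - Δt * L ≤ γ x := by
    intro x hx
    have h1 : Δt * deriv u x ≤ Δt * L :=
      mul_le_mul_of_nonneg_left ((abs_le.1 (hu' x hx)).2) hΔt.le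
    simp only [hγ]; linarith
  have hγpos : ∀ x ∈ Icc a b, 0 < γ x := fun x hx => by
    have := hγlow x hx; linarith
  have hγhigh : ∀ x ∈ Icc a b, γ x ≤ 2 := by
    intro x hx
    have h1 : -(Δt * L) ≤ Δt * deriv u x := by
      have := (abs_le.1 (hu' x hx)).1
      nlinarith
    simp only [hγ]; linarith
  -- X is strictly monotone on [a,b]
  have hXcont : Continuous X := by
    exact continuous_id.sub (continuous_const.mul hu.continuous)
  have hXmono : StrictMonoOn X (Icc a b) := by
    apply strictMonoOn_of_deriv_pos (convex_Icc a b) hXcont.continuousOn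
    intro x hx
    rw [interior_Icc] at hx
    have : deriv X x = γ x := (hXderiv x).deriv
    rw [this]
    exact hγpos x (Ioo_subset_Icc_self hx)
  have hXa : X a = a := by simp [hX, hua]
  have hXb : X b = b := by simp [hX, hub]
  -- image of [a,b] under X is [a,b]
  have himg : X '' Icc a b = Icc a b := by
    apply Subset.antisymm
    · rintro _ ⟨x, hx, rfl⟩
      constructor
      · rw [← hXa]
        rcases eq_or_lt_of_le hx.1 with h | h
        · rw [h]
        · exact (hXmono (left_mem_Icc.2 hab.le) hx h).le
      · rw [← hXb]
        rcases eq_or_lt_of_le hx.2 with h | h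
        · rw [h]
        · exact (hXmono hx (right_mem_Icc.2 hab.le) h).le
    · have := intermediate_value_Icc hab.le hXcont.continuousOn
      rwa [hXa, hXb] at this
  have hsmeas : MeasurableSet (Icc a b) := measurableSet_Icc
  have hXd : ∀ x ∈ Icc a b, HasDerivWithinAt X (γ x) (Icc a b) x :=
    fun x _ => (hXderiv x).hasDerivWithinAt
  -- change of variables
  set g : ℝ → ENNReal := fun y => ENNReal.ofReal (ψ y ^ 2) with hg
  have hgmeas : Measurable g := (hψ.pow_const 2).ennreal_ofReal
  have hcov : ∫⁻ y in Icc a b, g y = ∫⁻ x in Icc a b, ENNReal.ofReal |γ x| * g (X x) := by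
    conv_lhs => rw [← himg]
    exact my_lintegral_image_eq hsmeas hXd (hXmono.injOn) g
  set c : ℝ := 1 + 2 * L * Δt with hc
  have hc1 : 1 ≤ c := by nlinarith
  have hc0 : 0 ≤ c := by linarith
  -- key scalar inequality : (1+2LΔt)(1-ΔtL) ≥ 1
  have hkey : ∀ x ∈ Icc a b, 1 ≤ c * |γ x| := by
    intro x hx
    have h1 := hγlow x hx
    have h2 := hγpos x hx
    rw [abs_of_pos h2]
    nlinarith
  -- forward bound
  have hfwd : (∫⁻ x in Icc a b, g (X x)) ≤ ENNReal.ofReal c * ∫⁻ y in Icc a b, g y := by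
    rw [hcov, ← lintegral_const_mul' _ _ ENNReal.ofReal_ne_top]
    apply setLIntegral_mono' hsmeas
    intro x hx
    calc g (X x) = 1 * g (X x) := (one_mul _).symm
      _ ≤ ENNReal.ofReal (c * |γ x|) * g (X x) := by
          apply mul_le_mul_left
          rw [← ENNReal.ofReal_one]
          exact ENNReal.ofReal_le_ofReal (hkey x hx)
      _ = ENNReal.ofReal c * (ENNReal.ofReal |γ x| * g (X x)) := by
          rw [ENNReal.ofReal_mul hc0, mul_assoc]
  -- reverse bound: L2 ≤ 2 * L1
  have hrev : (∫⁻ y in Icc a b, g y) ≤ 2 * ∫⁻ x in Icc a b, g (X x) := by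
    rw [hcov, ← lintegral_const_mul' _ _ (by norm_num : (2 : ENNReal) ≠ ⊤)]
    apply setLIntegral_mono' hsmeas
    intro x hx
    apply mul_le_mul_left
    rw [abs_of_pos (hγpos x hx)]
    calc ENNReal.ofReal (γ x) ≤ ENNReal.ofReal 2 :=
          ENNReal.ofReal_le_ofReal (hγhigh x hx)
      _ = 2 := by norm_num
  -- rewrite the interval integrals as lintegrals
  have hpsi2 : ∀ y : ℝ, (0 : ℝ) ≤ ψ y ^ 2 := fun y => sq_nonneg _
  have hIoc : (volume : Measure ℝ).restrict (Ioc a b)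
      = (volume : Measure ℝ).restrict (Icc a b) :=
    Measure.restrict_congr_set Ioc_ae_eq_Icc
  set L1 : ENNReal := ∫⁻ x in Icc a b, g (X x) with hL1
  set L2 : ENNReal := ∫⁻ y in Icc a b, g y with hL2
  have heq1 : (∫ x in a..b, ψ (X x) ^ 2) = L1.toReal := by
    rw [intervalIntegral.integral_of_le hab.le, hIoc]
    rw [integral_eq_lintegral_of_nonneg_ae (Filter.Eventually.of_forall fun x => hpsi2 (X x))
      ((hψ.comp hXcont.measurable).pow_const 2).aestronglyMeasurable.restrict]
  have heq2 : (∫ y in a..b, ψ y ^ 2) = L2.toReal := by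
    rw [intervalIntegral.integral_of_le hab.le, hIoc]
    rw [integral_eq_lintegral_of_nonneg_ae (Filter.Eventually.of_forall hpsi2)
      ((hψ.pow_const 2).aestronglyMeasurable.restrict)]
  rw [heq1, heq2]
  by_cases hfin : L2 = ⊤
  · have hL1top : L1 = ⊤ := by
      by_contra hL1top
      have : L2 < ⊤ := lt_of_le_of_lt hrev
        (ENNReal.mul_lt_top (by norm_num) (lt_top_iff_ne_top.2 hL1top))
      exact this.ne hfin
    rw [hfin, hL1top]
    simp
  · calc L1.toReal ≤ (ENNReal.ofReal c * L2).toReal := by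
          apply ENNReal.toReal_mono _ hfwd
          exact ENNReal.mul_ne_top ENNReal.ofReal_ne_top hfin
      _ = c * L2.toReal := by
          rw [ENNReal.toReal_mul, ENNReal.toReal_ofReal hc0]
end

section
/- Let a<b, Δt>0 and M≥0 with Δt·M ≤ 1/4. Let u:[a,b]→ℝ be differentiable with u(a)=u(b)=0, |u(x)| ≤ M and |u'(x)| ≤ M for all x∈[a,b], and set X(x)=x−Δt·u(x). Then there exists a constant c>0 depending only on M such that for every continuously differentiable ψ:[a,b]→ℝ: ( ∫_a^b (ψ(x)−ψ(X(x)))² dx )^{1/2} ≤ c·Δt·( (∫_a^b ψ(y)² dy)^{1/2} + (∫_a^b ψ'(y)² dy)^{1/2} ). -/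
open MeasureTheory

private lemma sq_intervalIntegral_le (f : ℝ → ℝ) (hf : Continuous f) {c d : ℝ} (hcd : c ≤ d) :
    (∫ t in c..d, f t) ^ 2 ≤ (d - c) * ∫ t in c..d, f t ^ 2 := by
  rcases eq_or_lt_of_le hcd with rfl | hlt
  · simp
  have hpos : 0 < d - c := by linarith
  set A := ∫ t in c..d, f t with hA
  set lam := A / (d - c) with hlam
  have h1 : (0:ℝ) ≤ ∫ t in c..d, (f t - lam) ^ 2 :=
    intervalIntegral.integral_nonneg hcd fun t _ => sq_nonneg _
  have h2 : ∫ t in c..d, (f t - lam) ^ 2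
      = (∫ t in c..d, f t ^ 2) - 2 * lam * A + lam ^ 2 * (d - c) := by
    have e : ∀ t, (f t - lam) ^ 2 = (f t ^ 2 - 2 * lam * f t) + lam ^ 2 := fun t => by ring
    simp_rw [e]
    rw [intervalIntegral.integral_add
        ((by fun_prop : Continuous (fun t => f t ^ 2 - 2 * lam * f t)).intervalIntegrable _ _)
        intervalIntegrable_const,
      intervalIntegral.integral_sub ((by fun_prop : Continuous (fun t => f t ^ 2)).intervalIntegrable _ _)
        ((by fun_prop : Continuous (fun t => 2 * lam * f t)).intervalIntegrable _ _),
      intervalIntegral.integral_const_mul, intervalIntegral.integral_const, smul_eq_mul, ← hA]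
    ring
  rw [h2] at h1
  have hc : lam * (d - c) = A := div_mul_cancel₀ _ hpos.ne'
  nlinarith [mul_nonneg hpos.le h1]

/-- **L² estimate for `ψ − ψ∘X`** with the upwind map `X(x) = x − Δt·u(x)`:
there is a constant `c = c(M) > 0` such that
`‖ψ − ψ∘X‖_{L²(a,b)} ≤ c·Δt·(‖ψ‖_{L²(a,b)} + ‖ψ'‖_{L²(a,b)})`
for every continuously differentiable `ψ`, whenever `Δt·M ≤ 1/4` and
`|u|, |u'| ≤ M` on `[a,b]` with `u` vanishing at the endpoints. -/
theorem composite_difference_L2_bound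
    (M : ℝ) (hM : 0 ≤ M) :
    ∃ c : ℝ, 0 < c ∧
      ∀ (a b Δt : ℝ) (u ψ : ℝ → ℝ),
        a < b → 0 < Δt → Δt * M ≤ 1 / 4 →
        Differentiable ℝ u → u a = 0 → u b = 0 →
        (∀ x ∈ Set.Icc a b, |u x| ≤ M) →
        (∀ x ∈ Set.Icc a b, |deriv u x| ≤ M) →
        ContDiff ℝ 1 ψ →
        Real.sqrt (∫ x in a..b, (ψ x - ψ (x - Δt * u x)) ^ 2)
          ≤ c * Δt * (Real.sqrt (∫ y in a..b, ψ y ^ 2)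
              + Real.sqrt (∫ y in a..b, deriv ψ y ^ 2)) := by
  refine ⟨2 * M + 1, by positivity, ?_⟩
  intro a b Δt u ψ hab hΔt hΔtM hu hua hub huM huM' hψ
  set h : ℝ := Δt * M with hh
  have hh0 : 0 ≤ h := by positivity
  have hh4 : h ≤ 1 / 4 := hΔtM
  have hψc : Continuous ψ := hψ.continuous
  have hψ'c : Continuous (deriv ψ) := hψ.continuous_deriv le_rfl
  -- Lipschitz bound for u on [a,b]
  have hulip : ∀ x ∈ Set.Icc a b, ∀ y ∈ Set.Icc a b, |u y - u x| ≤ M * |y - x| := by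
    intro x hx y hy
    have := Convex.norm_image_sub_le_of_norm_deriv_le
      (fun z (_ : z ∈ Set.Icc a b) => (hu z)) (fun z hz => by simpa using huM' z hz)
      (convex_Icc a b) hx hy
    simpa [Real.norm_eq_abs] using this
  -- X maps [a,b] into itself
  have hXmem : ∀ x ∈ Set.Icc a b, x - Δt * u x ∈ Set.Icc a b := by
    intro x hx
    have hxa : (0:ℝ) ≤ x - a := by linarith [hx.1]
    have hxb : (0:ℝ) ≤ b - x := by linarith [hx.2]
    have h1 : |u x| ≤ M * (x - a) := by
      have := hulip a ⟨le_rfl, hab.le⟩ x hx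
      rwa [hua, sub_zero, abs_of_nonneg hxa] at this
    have h2 : |u x| ≤ M * (b - x) := by
      have := hulip b ⟨hab.le, le_rfl⟩ x hx
      rwa [hub, sub_zero, abs_of_nonpos (by linarith [hx.2] : x - b ≤ 0), neg_sub] at this
    have e1 : Δt * u x ≤ h * (x - a) := by
      have := le_abs_self (u x)
      have := mul_le_mul_of_nonneg_left h1 hΔt.le
      rw [hh]; nlinarith
    have e2 : -(Δt * u x) ≤ h * (b - x) := by
      have := neg_abs_le (u x)
      have := mul_le_mul_of_nonneg_left h2 hΔt.le
      rw [hh]; nlinarith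
    have q1 : h * (x - a) ≤ (1/4) * (x - a) := mul_le_mul_of_nonneg_right hh4 hxa
    have q2 : h * (b - x) ≤ (1/4) * (b - x) := mul_le_mul_of_nonneg_right hh4 hxb
    constructor <;> nlinarith
  -- displacement bound
  have hXd : ∀ x ∈ Set.Icc a b, |Δt * u x| ≤ h := by
    intro x hx
    rw [abs_mul, abs_of_pos hΔt, hh]
    exact mul_le_mul_of_nonneg_left (huM x hx) hΔt.le
  -- the (extended) squared derivative and its primitive
  set f2 : ℝ → ℝ := fun s => deriv ψ s ^ 2 with hf2
  set g : ℝ → ℝ := Set.indicator (Set.Icc a b) f2 with hg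
  have hgint : Integrable g := by
    rw [hg, integrable_indicator_iff measurableSet_Icc]
    exact (hψ'c.pow 2).integrableOn_Icc
  have hgnn : ∀ s, 0 ≤ g s := fun s => Set.indicator_nonneg (fun t _ => sq_nonneg _) s
  set I : ℝ := ∫ s, g s with hI
  have hInn : 0 ≤ I := integral_nonneg hgnn
  have hIeq : I = ∫ s in a..b, deriv ψ s ^ 2 := by
    rw [hI, hg, integral_indicator measurableSet_Icc,
      intervalIntegral.integral_of_le hab.le, integral_Icc_eq_integral_Ioc]
  set H : ℝ → ℝ := fun t => ∫ s in (a-1)..t, g s with hH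
  have hgii : ∀ c d : ℝ, IntervalIntegrable g volume c d := fun c d => hgint.intervalIntegrable
  have hHcont : Continuous H := hgint.continuous_primitive (a-1)
  have hHnn : ∀ t, a - 1 ≤ t → 0 ≤ H t := fun t ht =>
    intervalIntegral.integral_nonneg ht fun s _ => hgnn s
  have hHle : ∀ t, H t ≤ I := by
    intro t
    rcases le_or_gt (a-1) t with h' | h'
    · rw [hH]; simp only
      rw [intervalIntegral.integral_of_le h']
      exact setIntegral_le_integral hgint (Filter.Eventually.of_forall hgnn)
    · have ht0 : H t ≤ 0 := by
        rw [hH]; simp only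
        rw [intervalIntegral.integral_of_ge h'.le]
        exact neg_nonpos.mpr (setIntegral_nonneg measurableSet_Ioc fun s _ => hgnn s)
      linarith
  have hHsub : ∀ c d : ℝ, (∫ s in c..d, g s) = H d - H c := by
    intro c d
    have := intervalIntegral.integral_add_adjacent_intervals (hgii (a-1) c) (hgii c d)
    rw [hH]; simp only; linarith
  -- pointwise bound
  have key : ∀ x ∈ Set.Icc a b,
      (ψ x - ψ (x - Δt * u x)) ^ 2 ≤ h * (H (x + h) - H (x - h)) := by
    intro x hx
    set y := x - Δt * u x with hy
    have hymem := hXmem x hx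
    have hyd : |x - y| ≤ h := by rw [hy]; simpa using hXd x hx
    set c' := min y x with hc'
    set d' := max y x with hd'
    have hcd : c' ≤ d' := min_le_max
    have hdc : d' - c' ≤ h := by
      rw [hd', hc', max_sub_min_eq_abs]
      exact hyd
    have hca : a ≤ c' := le_min hymem.1 hx.1
    have hdb : d' ≤ b := max_le hymem.2 hx.2
    have hch : x - h ≤ c' := by
      refine le_min ?_ (by linarith)
      have := abs_le.1 hyd; linarith [this.1]
    have hdh : d' ≤ x + h := by
      refine max_le ?_ (by linarith)
      have := abs_le.1 hyd; linarith [this.2]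
    have hftc : ∫ t in y..x, deriv ψ t = ψ x - ψ y :=
      intervalIntegral.integral_deriv_eq_sub (fun t _ => hψ.differentiable one_ne_zero t)
        (hψ'c.intervalIntegrable _ _)
    have hsq : (ψ x - ψ y) ^ 2 = (∫ t in c'..d', deriv ψ t) ^ 2 := by
      rw [← hftc]
      rcases le_total y x with h' | h'
      · rw [hc', hd', min_eq_left h', max_eq_right h']
      · rw [hc', hd', min_eq_right h', max_eq_left h',
          intervalIntegral.integral_symm, neg_pow]
        ring
    have hnn2 : 0 ≤ ∫ t in c'..d', deriv ψ t ^ 2 :=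
      intervalIntegral.integral_nonneg hcd fun t _ => sq_nonneg _
    calc (ψ x - ψ y) ^ 2 = (∫ t in c'..d', deriv ψ t) ^ 2 := hsq
      _ ≤ (d' - c') * ∫ t in c'..d', deriv ψ t ^ 2 :=
          sq_intervalIntegral_le _ hψ'c hcd
      _ ≤ h * ∫ t in c'..d', deriv ψ t ^ 2 := mul_le_mul_of_nonneg_right hdc hnn2
      _ = h * ∫ t in c'..d', g t := by
          congr 1
          refine intervalIntegral.integral_congr fun t ht => ?_
          rw [Set.uIcc_of_le hcd] at ht
          rw [hg]
          exact (Set.indicator_of_mem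
            (show t ∈ Set.Icc a b from ⟨le_trans hca ht.1, le_trans ht.2 hdb⟩) f2).symm
      _ ≤ h * ∫ t in (x-h)..(x+h), g t := by
          refine mul_le_mul_of_nonneg_left ?_ hh0
          exact intervalIntegral.integral_mono_interval hch hcd hdh
            (Filter.Eventually.of_forall hgnn) (hgii _ _)
      _ = h * (H (x + h) - H (x - h)) := by rw [hHsub]
  -- integrate the pointwise bound
  have hint1 : IntervalIntegrable (fun x => (ψ x - ψ (x - Δt * u x)) ^ 2) volume a b :=
    ((hψc.sub (hψc.comp (continuous_id.sub (continuous_const.mul hu.continuous)))).pow 2).intervalIntegrable _ _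
  have hint2 : IntervalIntegrable (fun x => h * (H (x + h) - H (x - h))) volume a b :=
    (continuous_const.mul ((hHcont.comp (continuous_id.add continuous_const)).sub
      (hHcont.comp (continuous_id.sub continuous_const)))).intervalIntegrable _ _
  have hmain : (∫ x in a..b, (ψ x - ψ (x - Δt * u x)) ^ 2)
      ≤ ∫ x in a..b, h * (H (x + h) - H (x - h)) :=
    intervalIntegral.integral_mono_on hab.le hint1 hint2 key
  -- compute/bound the right-hand side via translation
  have hHi : ∀ c d : ℝ, IntervalIntegrable H volume c d := fun c d =>
    hHcont.intervalIntegrable c d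
  have hRHS : (∫ x in a..b, h * (H (x + h) - H (x - h))) ≤ 2 * h ^ 2 * I := by
    have hsplit : (∫ x in a..b, (H (x + h) - H (x - h)))
        = (∫ t in (b-h)..(b+h), H t) - ∫ t in (a-h)..(a+h), H t := by
      have hc1 : Continuous fun x : ℝ => H (x + h) :=
        hHcont.comp (continuous_id.add continuous_const)
      have hc2 : Continuous fun x : ℝ => H (x - h) :=
        hHcont.comp (continuous_id.sub continuous_const)
      rw [intervalIntegral.integral_sub (hc1.intervalIntegrable _ _)
          (hc2.intervalIntegrable _ _)]
      rw [intervalIntegral.integral_comp_add_right, intervalIntegral.integral_comp_sub_right]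
      have h1 := intervalIntegral.integral_add_adjacent_intervals (hHi (a+h) (b-h)) (hHi (b-h) (b+h))
      have h2 := intervalIntegral.integral_add_adjacent_intervals (hHi (a-h) (a+h)) (hHi (a+h) (b-h))
      linarith
    have hb1 : (∫ t in (b-h)..(b+h), H t) ≤ 2 * h * I := by
      calc (∫ t in (b-h)..(b+h), H t) ≤ ∫ _ in (b-h)..(b+h), I :=
            intervalIntegral.integral_mono_on (by linarith) (hHi _ _)
              intervalIntegrable_const (fun t _ => hHle t)
        _ = 2 * h * I := by rw [intervalIntegral.integral_const, smul_eq_mul]; ring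
    have hb2 : 0 ≤ ∫ t in (a-h)..(a+h), H t :=
      intervalIntegral.integral_nonneg (by linarith)
        (fun t ht => hHnn t (by have := ht.1; linarith))
    have hmul : (∫ x in a..b, h * (H (x + h) - H (x - h)))
        = h * ∫ x in a..b, (H (x + h) - H (x - h)) := by
      rw [intervalIntegral.integral_const_mul]
    rw [hmul, hsplit]
    nlinarith
  have hfin : (∫ x in a..b, (ψ x - ψ (x - Δt * u x)) ^ 2) ≤ ((2*M+1) * Δt) ^ 2 * I := by
    have : 2 * h ^ 2 * I ≤ ((2*M+1) * Δt) ^ 2 * I := by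
      have : 2 * h ^ 2 ≤ ((2*M+1) * Δt) ^ 2 := by rw [hh]; nlinarith
      exact mul_le_mul_of_nonneg_right this hInn
    linarith
  calc Real.sqrt (∫ x in a..b, (ψ x - ψ (x - Δt * u x)) ^ 2)
      ≤ Real.sqrt (((2*M+1) * Δt) ^ 2 * I) := Real.sqrt_le_sqrt hfin
    _ = (2*M+1) * Δt * Real.sqrt I := by
        rw [Real.sqrt_mul (sq_nonneg _), Real.sqrt_sq (by positivity)]
    _ ≤ (2*M+1) * Δt * (Real.sqrt (∫ y in a..b, ψ y ^ 2)
          + Real.sqrt (∫ y in a..b, deriv ψ y ^ 2)) := by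
        rw [hIeq]
        refine mul_le_mul_of_nonneg_left ?_ (by positivity)
        exact le_add_of_nonneg_left (Real.sqrt_nonneg _)
end

section
/- Let a<b, Δt>0 and M≥0 with Δt·M ≤ 1/4. Let u:[a,b]→ℝ be differentiable with u(a)=u(b)=0, |u(x)| ≤ M and |u'(x)| ≤ M for all x∈[a,b], and set X(x)=x−Δt·u(x). Then there exists a constant c>0 depending only on M such that for every square-integrable ψ:[a,b]→ℝ and every continuously differentiable v:[a,b]→ℝ with v(a)=v(b)=0: | ∫_a^b (ψ(x)−ψ(X(x)))·v(x) dx | ≤ c·Δt·( ∫_a^b ψ(y)² dy )^{1/2} · ( (∫_a^b v(x)² dx)^{1/2} + (∫_a^b v'(x)² dx)^{1/2} ). -/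
open MeasureTheory

open Set


/-- Cauchy–Schwarz for real functions. -/
lemma cs_aux {μ : Measure ℝ} (f g : ℝ → ℝ)
    (hf : MemLp f 2 μ) (hg : MemLp g 2 μ) :
    ∫ a, |f a| * |g a| ∂μ
      ≤ Real.sqrt (∫ a, f a ^ 2 ∂μ) * Real.sqrt (∫ a, g a ^ 2 ∂μ) := by
  have hpq : Real.HolderConjugate 2 2 := Real.holderConjugate_iff.mpr ⟨one_lt_two, by norm_num⟩
  have hf2 : MemLp f (ENNReal.ofReal 2) μ := by
    simpa [ENNReal.ofReal_ofNat] using hf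
  have hg2 : MemLp g (ENNReal.ofReal 2) μ := by
    simpa [ENNReal.ofReal_ofNat] using hg
  have h := MeasureTheory.integral_mul_norm_le_Lp_mul_Lq hpq hf2 hg2
  have habs : ∀ x : ℝ, ‖x‖ ^ (2:ℝ) = x ^ 2 := fun x => by
    rw [Real.norm_eq_abs, show (2:ℝ) = ((2:ℕ):ℝ) by norm_num, Real.rpow_natCast, sq_abs]
  simp only [Real.norm_eq_abs] at h
  calc ∫ a, |f a| * |g a| ∂μ
      ≤ (∫ a, |f a| ^ (2:ℝ) ∂μ) ^ (1/(2:ℝ)) * (∫ a, |g a| ^ (2:ℝ) ∂μ) ^ (1/(2:ℝ)) := h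
    _ = Real.sqrt (∫ a, f a ^ 2 ∂μ) * Real.sqrt (∫ a, g a ^ 2 ∂μ) := by
        simp only [show ∀ x:ℝ, |x| ^ (2:ℝ) = x ^ 2 from fun x => by
          rw [show (2:ℝ) = ((2:ℕ):ℝ) by norm_num, Real.rpow_natCast]
          exact sq_abs x]
        rw [Real.sqrt_eq_rpow, Real.sqrt_eq_rpow]

/-- product of two L² functions is integrable -/
lemma mul_int_aux {μ : Measure ℝ} {f g : ℝ → ℝ}
    (hfm : AEStronglyMeasurable f μ) (hgm : AEStronglyMeasurable g μ)
    (hf2 : Integrable (fun x => f x ^ 2) μ) (hg2 : Integrable (fun x => g x ^ 2) μ) :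
    Integrable (fun x => f x * g x) μ := by
  refine Integrable.mono' ((hf2.add hg2).const_mul (1/2)) (hfm.mul hgm) ?_
  refine Filter.Eventually.of_forall fun x => ?_
  simp only [Pi.add_apply]
  rw [Real.norm_eq_abs, abs_mul]
  nlinarith [sq_nonneg (|f x| - |g x|), sq_abs (f x), sq_abs (g x), abs_nonneg (f x),
    abs_nonneg (g x)]

/-- Change of variables identity and integrability transfer. -/
lemma cov_eq_aux {a b : ℝ} (hab : a ≤ b) {w : ℝ → ℝ} (hw : Differentiable ℝ w)
    (hwa : w a = a) (hwb : w b = b)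
    (hlo : ∀ x ∈ Icc a b, 3/4 ≤ deriv w x) (g : ℝ → ℝ) :
    (∫ y in Icc a b, g y = ∫ t in Icc a b, |deriv w t| * g (w t)) ∧
    (IntegrableOn g (Icc a b) →
      IntegrableOn (fun t => |deriv w t| * g (w t)) (Icc a b)) := by
  have hder : ∀ x ∈ Icc a b, HasDerivWithinAt w (deriv w x) (Icc a b) x :=
    fun x _ => (hw x).hasDerivAt.hasDerivWithinAt
  have hmono : StrictMonoOn w (Icc a b) := by
    refine strictMonoOn_of_hasDerivWithinAt_pos (convex_Icc a b)
      hw.continuous.continuousOn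
      (fun x _ => (hw x).hasDerivAt.hasDerivWithinAt) (fun x hx => ?_)
    exact lt_of_lt_of_le (by norm_num) (hlo x (interior_subset hx))
  have hinj : InjOn w (Icc a b) := hmono.injOn
  have himg : w '' Icc a b = Icc a b := by
    apply Subset.antisymm
    · rintro _ ⟨x, hx, rfl⟩
      exact ⟨hwa ▸ hmono.monotoneOn (left_mem_Icc.2 hab) hx hx.1,
             hwb ▸ hmono.monotoneOn hx (right_mem_Icc.2 hab) hx.2⟩
    · have := intermediate_value_Icc hab hw.continuous.continuousOn
      rwa [hwa, hwb] at this
  constructor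
  · conv_lhs => rw [← himg]
    simpa [smul_eq_mul] using
      integral_image_eq_integral_abs_deriv_smul measurableSet_Icc hder hinj g
  · intro hgi
    have := (integrableOn_image_iff_integrableOn_abs_deriv_smul
      measurableSet_Icc hder hinj g).mp (by rwa [himg])
    simpa [smul_eq_mul] using this

/-- Change of variables bound for nonnegative integrands. -/
lemma cov_le_aux {a b : ℝ} (hab : a ≤ b) {w : ℝ → ℝ} (hw : Differentiable ℝ w)
    (hwa : w a = a) (hwb : w b = b)
    (hlo : ∀ x ∈ Icc a b, 3/4 ≤ deriv w x) {g : ℝ → ℝ}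
    (hgm : Measurable g) (hgnn : ∀ y, 0 ≤ g y) (hgi : IntegrableOn g (Icc a b)) :
    IntegrableOn (fun t => g (w t)) (Icc a b) ∧
      ∫ t in Icc a b, g (w t) ≤ (4/3) * ∫ y in Icc a b, g y := by
  obtain ⟨key, hint'⟩ := cov_eq_aux hab hw hwa hwb hlo g
  have hint := hint' hgi
  have hcm : AEStronglyMeasurable (fun t => g (w t)) (volume.restrict (Icc a b)) :=
    (hgm.comp hw.continuous.measurable).aestronglyMeasurable
  have hci : IntegrableOn (fun t => g (w t)) (Icc a b) := by
    refine Integrable.mono' (hint.const_mul (4/3)) hcm ?_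
    refine ae_restrict_of_forall_mem measurableSet_Icc (fun x hx => ?_)
    have h1 : (3/4:ℝ) ≤ deriv w x := hlo x hx
    have h2 : 0 ≤ g (w x) := hgnn _
    rw [Real.norm_eq_abs, abs_of_nonneg h2, abs_of_nonneg (le_trans (by norm_num) h1)]
    nlinarith
  refine ⟨hci, ?_⟩
  rw [key]
  calc ∫ t in Icc a b, g (w t)
      ≤ ∫ t in Icc a b, (4/3) * (|deriv w t| * g (w t)) := by
        refine setIntegral_mono_on hci (hint.const_mul (4/3)) measurableSet_Icc
          (fun x hx => ?_)
        have h1 : (3/4:ℝ) ≤ deriv w x := hlo x hx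
        have h2 : 0 ≤ g (w x) := hgnn _
        rw [abs_of_nonneg (le_trans (by norm_num) h1)]
        nlinarith
    _ = (4/3) * ∫ t in Icc a b, |deriv w t| * g (w t) := integral_const_mul _ _

/-- Jensen / Cauchy-Schwarz on [0,1]. -/
lemma jensen_aux (f : ℝ → ℝ) (hf : Continuous f) :
    (∫ r in Icc (0:ℝ) 1, f r) ^ 2 ≤ ∫ r in Icc (0:ℝ) 1, f r ^ 2 := by
  set μ := volume.restrict (Icc (0:ℝ) 1)
  have m2 : MemLp f 2 μ := by
    refine (memLp_two_iff_integrable_sq hf.aestronglyMeasurable.restrict).mpr ?_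
    exact (hf.pow 2).continuousOn.integrableOn_compact isCompact_Icc
  have m1 : MemLp (fun _ : ℝ => (1:ℝ)) 2 μ := by
    have : IsFiniteMeasure μ := by
      constructor
      simp [μ, Measure.restrict_apply, Real.volume_Icc]
    exact memLp_const 1
  have h := cs_aux f (fun _ => 1) m2 m1
  have hμ : ∫ _, (1:ℝ) ∂μ = 1 := by
    simp [μ, Real.volume_Icc]
  simp only [abs_one, mul_one, one_pow] at h
  rw [hμ, Real.sqrt_one, mul_one] at h
  have hnn : 0 ≤ ∫ r, f r ^ 2 ∂μ := integral_nonneg (fun x => sq_nonneg _)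
  have h2 : |∫ r, f r ∂μ| ≤ Real.sqrt (∫ r, f r ^ 2 ∂μ) :=
    le_trans (by simpa using norm_integral_le_integral_norm (μ := μ) f) h
  calc (∫ r, f r ∂μ) ^ 2 = |∫ r, f r ∂μ| ^ 2 := (sq_abs _).symm
    _ ≤ Real.sqrt (∫ r, f r ^ 2 ∂μ) ^ 2 := by
        nlinarith [Real.sqrt_nonneg (∫ r, f r ^ 2 ∂μ), abs_nonneg (∫ r, f r ∂μ)]
    _ = ∫ r, f r ^ 2 ∂μ := Real.sq_sqrt hnn

set_option maxHeartbeats 1000000 in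
/-- **H⁻¹ estimate for `ψ − ψ∘X`** with the upwind map `X(x) = x − Δt·u(x)`:
there is a constant `c = c(M) > 0` such that for every square-integrable `ψ` and
every `v ∈ C¹` vanishing at the endpoints,
`|∫ (ψ − ψ∘X) v| ≤ c·Δt·‖ψ‖_{L²(a,b)}·(‖v‖_{L²(a,b)} + ‖v'‖_{L²(a,b)})`,
whenever `Δt·M ≤ 1/4` and `|u|, |u'| ≤ M` on `[a,b]` with `u` vanishing at the
endpoints. -/
theorem composite_difference_Hminus1_bound
    (M : ℝ) (hM : 0 ≤ M) :
    ∃ c : ℝ, 0 < c ∧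
      ∀ (a b Δt : ℝ) (u ψ v : ℝ → ℝ),
        a < b → 0 < Δt → Δt * M ≤ 1 / 4 →
        Differentiable ℝ u → u a = 0 → u b = 0 →
        (∀ x ∈ Set.Icc a b, |u x| ≤ M) →
        (∀ x ∈ Set.Icc a b, |deriv u x| ≤ M) →
        Measurable ψ → IntervalIntegrable (fun y => ψ y ^ 2) volume a b →
        ContDiff ℝ 1 v → v a = 0 → v b = 0 →
        |∫ x in a..b, (ψ x - ψ (x - Δt * u x)) * v x|
          ≤ c * Δt * Real.sqrt (∫ y in a..b, ψ y ^ 2)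
              * (Real.sqrt (∫ x in a..b, v x ^ 2)
                 + Real.sqrt (∫ x in a..b, deriv v x ^ 2)) := by
  refine ⟨4 * M + 1, by positivity, ?_⟩
  intro a b Δt u ψ v hab hΔt hsmall hu hua hub huM huM' hψm hψ2 hv hva hvb
  have hab' : a ≤ b := le_of_lt hab
  have iconv : ∀ f : ℝ → ℝ, ∫ x in a..b, f x = ∫ x in Icc a b, f x := fun f => by
    rw [intervalIntegral.integral_of_le hab', integral_Icc_eq_integral_Ioc]
  rw [iconv, iconv, iconv, iconv]
  -- continuity facts
  have hucont : Continuous u := hu.continuous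
  have hvd : Differentiable ℝ v := hv.differentiable one_ne_zero
  have hvc : Continuous v := hvd.continuous
  have hv' : Continuous (deriv v) := hv.continuous_deriv le_rfl
  -- derivative of `t ↦ t - c * u t`
  have hderw : ∀ (c t : ℝ), HasDerivAt (fun s => s - c * u s) (1 - c * deriv u t) t :=
    fun c t => (hasDerivAt_id t).sub (((hu t).hasDerivAt).const_mul c)
  have hderiv_eq : ∀ (c t : ℝ), deriv (fun s => s - c * u s) t = 1 - c * deriv u t :=
    fun c t => (hderw c t).deriv
  have hwdiff : ∀ c : ℝ, Differentiable ℝ (fun s => s - c * u s) :=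
    fun c t => (hderw c t).differentiableAt
  have hwa : ∀ c : ℝ, (fun s => s - c * u s) a = a := fun c => by simp [hua]
  have hwb : ∀ c : ℝ, (fun s => s - c * u s) b = b := fun c => by simp [hub]
  have hlo : ∀ c : ℝ, 0 ≤ c → c ≤ Δt →
      ∀ x ∈ Icc a b, (3/4 : ℝ) ≤ deriv (fun s => s - c * u s) x := by
    intro c hc0 hcΔ x hx
    rw [hderiv_eq]
    have h1 : |deriv u x| ≤ M := huM' x hx
    have h2 : |c * deriv u x| ≤ Δt * M := by
      rw [abs_mul, abs_of_nonneg hc0]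
      exact mul_le_mul hcΔ h1 (abs_nonneg _) hΔt.le
    have h3 := (abs_le.mp (h2.trans hsmall)).2
    linarith
  -- basic integrabilities on `Icc a b`
  have hψ2I : IntegrableOn (fun y => ψ y ^ 2) (Icc a b) := by
    rw [integrableOn_Icc_iff_integrableOn_Ioc]
    exact hψ2.1
  have hv2I : IntegrableOn (fun x => v x ^ 2) (Icc a b) :=
    (hvc.pow 2).continuousOn.integrableOn_compact isCompact_Icc
  have hdv2I : IntegrableOn (fun x => deriv v x ^ 2) (Icc a b) :=
    (hv'.pow 2).continuousOn.integrableOn_compact isCompact_Icc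
  -- change of variables, specialized
  have covle : ∀ c : ℝ, 0 ≤ c → c ≤ Δt → ∀ g : ℝ → ℝ, Measurable g → (∀ y, 0 ≤ g y) →
      IntegrableOn g (Icc a b) →
      IntegrableOn (fun t => g (t - c * u t)) (Icc a b) ∧
        ∫ t in Icc a b, g (t - c * u t) ≤ (4/3) * ∫ y in Icc a b, g y :=
    fun c hc0 hcΔ g hgm hgnn hgi =>
      cov_le_aux hab' (hwdiff c) (hwa c) (hwb c) (hlo c hc0 hcΔ) hgm hgnn hgi
  have covψ := covle Δt hΔt.le le_rfl (fun y => ψ y ^ 2) (hψm.pow_const 2)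
    (fun y => sq_nonneg _) hψ2I
  have covv := covle Δt hΔt.le le_rfl (fun y => v y ^ 2) ((hvc.pow 2).measurable)
    (fun y => sq_nonneg _) hv2I
  -- abbreviations
  set P := ∫ y in Icc a b, ψ y ^ 2 with hP
  set Q := ∫ x in Icc a b, v x ^ 2 with hQ
  set R := ∫ x in Icc a b, deriv v x ^ 2 with hR
  set Pc := ∫ t in Icc a b, ψ (t - Δt * u t) ^ 2 with hPcdef
  set Qc := ∫ t in Icc a b, v (t - Δt * u t) ^ 2 with hQcdef
  set S := ∫ t in Icc a b, (v (t - Δt * u t) - v t) ^ 2 with hSdef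
  have hP0 : 0 ≤ P := integral_nonneg fun _ => sq_nonneg _
  have hQ0 : 0 ≤ Q := integral_nonneg fun _ => sq_nonneg _
  have hR0 : 0 ≤ R := integral_nonneg fun _ => sq_nonneg _
  have hPc : Pc ≤ (4/3) * P := covψ.2
  have hQc : Qc ≤ (4/3) * Q := covv.2
  -- MemLp facts
  have hXcont : Continuous (fun t => t - Δt * u t) := (hwdiff Δt).continuous
  have hψXm : Measurable (fun t => ψ (t - Δt * u t)) := hψm.comp hXcont.measurable
  have mψX : MemLp (fun t => ψ (t - Δt * u t)) 2 (volume.restrict (Icc a b)) :=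
    (memLp_two_iff_integrable_sq hψXm.aestronglyMeasurable).mpr covψ.1
  have memc : ∀ f : ℝ → ℝ, Continuous f → MemLp f 2 (volume.restrict (Icc a b)) :=
    fun f hf => (memLp_two_iff_integrable_sq hf.aestronglyMeasurable).mpr
      ((hf.pow 2).continuousOn.integrableOn_compact isCompact_Icc)
  have mvX : MemLp (fun t => v (t - Δt * u t)) 2 (volume.restrict (Icc a b)) :=
    memc _ (hvc.comp hXcont)
  have mdiff : MemLp (fun t => v (t - Δt * u t) - v t) 2 (volume.restrict (Icc a b)) :=
    memc _ ((hvc.comp hXcont).sub hvc)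
  -- integrable products
  have hIψv : IntegrableOn (fun x => ψ x * v x) (Icc a b) :=
    mul_int_aux hψm.aestronglyMeasurable hvc.aestronglyMeasurable hψ2I hv2I
  have hvX2I : IntegrableOn (fun t => v (t - Δt * u t) ^ 2) (Icc a b) :=
    ((hvc.comp hXcont).pow 2).continuousOn.integrableOn_compact isCompact_Icc
  have hIψXv : IntegrableOn (fun x => ψ (x - Δt * u x) * v x) (Icc a b) :=
    mul_int_aux hψXm.aestronglyMeasurable hvc.aestronglyMeasurable covψ.1 hv2I
  -- change of variables identity for `ψ·v`
  obtain ⟨keyid, keyint⟩ := cov_eq_aux hab' (hwdiff Δt) (hwa Δt) (hwb Δt)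
    (hlo Δt hΔt.le le_rfl) (fun y => ψ y * v y)
  have keyI2 : IntegrableOn
      (fun t => |deriv (fun s => s - Δt * u s) t| *
        (ψ (t - Δt * u t) * v (t - Δt * u t))) (Icc a b) := keyint hIψv
  -- split the integral
  have hsplit : ∫ x in Icc a b, (ψ x - ψ (x - Δt * u x)) * v x
      = ∫ t in Icc a b,
          (|deriv (fun s => s - Δt * u s) t| * (ψ (t - Δt * u t) * v (t - Δt * u t))
            - ψ (t - Δt * u t) * v t) := by
    have e1 : ∫ x in Icc a b, (ψ x - ψ (x - Δt * u x)) * v x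
        = (∫ x in Icc a b, ψ x * v x) - ∫ x in Icc a b, ψ (x - Δt * u x) * v x := by
      rw [← integral_sub hIψv hIψXv]
      congr 1
      funext x
      ring
    rw [e1, keyid, integral_sub keyI2 hIψXv]
  set F : ℝ → ℝ := fun t =>
    |deriv (fun s => s - Δt * u s) t| * (ψ (t - Δt * u t) * v (t - Δt * u t))
      - ψ (t - Δt * u t) * v t with hFdef
  -- pointwise bound for |F|
  have hptE : ∀ t ∈ Icc a b,
      |F t| ≤ |ψ (t - Δt * u t)| * |v (t - Δt * u t) - v t|
            + (Δt * M) * (|ψ (t - Δt * u t)| * |v (t - Δt * u t)|) := by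
    intro t ht
    have h34 : (3/4:ℝ) ≤ deriv (fun s => s - Δt * u s) t := hlo Δt hΔt.le le_rfl t ht
    rw [hFdef]
    simp only [hderiv_eq] at h34 ⊢
    set A := ψ (t - Δt * u t)
    set B := v (t - Δt * u t)
    set C := v t
    rw [abs_of_nonneg (by linarith : (0:ℝ) ≤ 1 - Δt * deriv u t)]
    have hd : |Δt * deriv u t| ≤ Δt * M := by
      rw [abs_mul, abs_of_pos hΔt]
      exact mul_le_mul_of_nonneg_left (huM' t ht) hΔt.le
    have key : (1 - Δt * deriv u t) * (A * B) - A * C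
        = A * (B - C) - (Δt * deriv u t) * (A * B) := by ring
    rw [key]
    refine le_trans (abs_sub _ _) ?_
    rw [abs_mul A (B - C), abs_mul (Δt * deriv u t) (A * B), abs_mul A B]
    have h5 : |Δt * deriv u t| * (|A| * |B|) ≤ (Δt * M) * (|A| * |B|) :=
      mul_le_mul_of_nonneg_right hd (by positivity)
    linarith
  -- integrability of the bounding functions
  have hB : IntegrableOn
      (fun t => |ψ (t - Δt * u t)| * |v (t - Δt * u t) - v t|) (Icc a b) := by
    have := (mul_int_aux hψXm.aestronglyMeasurable
      ((hvc.comp hXcont).sub hvc).aestronglyMeasurable covψ.1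
      ((((hvc.comp hXcont).sub hvc).pow 2).continuousOn.integrableOn_compact
        isCompact_Icc)).abs
    simpa [abs_mul, IntegrableOn] using this
  have hC : IntegrableOn
      (fun t => |ψ (t - Δt * u t)| * |v (t - Δt * u t)|) (Icc a b) := by
    have := (mul_int_aux hψXm.aestronglyMeasurable
      (hvc.comp hXcont).aestronglyMeasurable covψ.1 hvX2I).abs
    simpa [abs_mul, IntegrableOn] using this
  -- Cauchy–Schwarz
  have csB := cs_aux (fun t => ψ (t - Δt * u t)) (fun t => v (t - Δt * u t) - v t)
    mψX mdiff
  have csC := cs_aux (fun t => ψ (t - Δt * u t)) (fun t => v (t - Δt * u t)) mψX mvX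
  have hEbound : |∫ x in Icc a b, (ψ x - ψ (x - Δt * u x)) * v x|
      ≤ Real.sqrt Pc * Real.sqrt S + (Δt * M) * (Real.sqrt Pc * Real.sqrt Qc) := by
    rw [hsplit]
    have step1 : |∫ t in Icc a b, F t| ≤ ∫ t in Icc a b, |F t| := by
      simpa [Real.norm_eq_abs] using
        norm_integral_le_integral_norm (μ := volume.restrict (Icc a b)) F
    have hFint : IntegrableOn F (Icc a b) := keyI2.sub hIψXv
    have step2 : ∫ t in Icc a b, |F t|
        ≤ ∫ t in Icc a b, (|ψ (t - Δt * u t)| * |v (t - Δt * u t) - v t|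
            + (Δt * M) * (|ψ (t - Δt * u t)| * |v (t - Δt * u t)|)) := by
      refine setIntegral_mono_on hFint.abs (hB.add (hC.const_mul (Δt * M)))
        measurableSet_Icc (fun t ht => ?_)
      have := hptE t ht
      linarith [mul_le_mul_of_nonneg_left (le_refl (0:ℝ)) (le_refl (0:ℝ))]
    have step3 : ∫ t in Icc a b, (|ψ (t - Δt * u t)| * |v (t - Δt * u t) - v t|
            + (Δt * M) * (|ψ (t - Δt * u t)| * |v (t - Δt * u t)|))
        = (∫ t in Icc a b, |ψ (t - Δt * u t)| * |v (t - Δt * u t) - v t|)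
          + (Δt * M) * ∫ t in Icc a b, |ψ (t - Δt * u t)| * |v (t - Δt * u t)| := by
      rw [integral_add hB (hC.const_mul (Δt * M)), integral_const_mul]
    refine le_trans step1 (le_trans step2 ?_)
    rw [step3]
    exact add_le_add csB (mul_le_mul_of_nonneg_left csC (by positivity))
  -- pointwise FTC + Jensen bound
  have hpt : ∀ t ∈ Icc a b, (v (t - Δt * u t) - v t) ^ 2
      ≤ (Δt * M) ^ 2 * ∫ r in Icc (0:ℝ) 1, (deriv v (t - r * (Δt * u t))) ^ 2 := by
    intro t ht
    set c := Δt * u t with hc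
    have hG : ∀ r ∈ uIcc (0:ℝ) 1,
        HasDerivAt (fun r : ℝ => v (t - r * c)) (deriv v (t - r * c) * -(1 * c)) r := by
      intro r _
      exact ((hvd (t - r * c)).hasDerivAt).comp r
        (((hasDerivAt_id r).mul_const c).const_sub t)
    have hcontD : Continuous fun r : ℝ => deriv v (t - r * c) :=
      hv'.comp (continuous_const.sub (continuous_id.mul continuous_const))
    have hftc := intervalIntegral.integral_eq_sub_of_hasDerivAt hG
      ((hcontD.mul continuous_const).intervalIntegrable 0 1)
    rw [intervalIntegral.integral_mul_const] at hftc
    simp only [one_mul, zero_mul, mul_zero, sub_zero] at hftc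
    have hJset : ∫ r in (0:ℝ)..1, deriv v (t - r * c)
        = ∫ r in Icc (0:ℝ) 1, deriv v (t - r * c) := by
      rw [intervalIntegral.integral_of_le zero_le_one, integral_Icc_eq_integral_Ioc]
    have hjen := jensen_aux (fun r => deriv v (t - r * c)) hcontD
    have hcM : |c| ≤ Δt * M := by
      rw [hc, abs_mul, abs_of_pos hΔt]
      exact mul_le_mul_of_nonneg_left (huM t ht) hΔt.le
    have hsq : (v (t - c) - v t) ^ 2
        = c ^ 2 * (∫ r in Icc (0:ℝ) 1, deriv v (t - r * c)) ^ 2 := by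
      rw [← hJset, ← hftc]; ring
    have hc2 : c ^ 2 ≤ (Δt * M) ^ 2 := by
      nlinarith [abs_nonneg c, sq_abs c]
    have hnnJ : 0 ≤ ∫ r in Icc (0:ℝ) 1, (deriv v (t - r * c)) ^ 2 :=
      integral_nonneg fun _ => sq_nonneg _
    calc (v (t - c) - v t) ^ 2
        = c ^ 2 * (∫ r in Icc (0:ℝ) 1, deriv v (t - r * c)) ^ 2 := hsq
      _ ≤ c ^ 2 * ∫ r in Icc (0:ℝ) 1, (deriv v (t - r * c)) ^ 2 :=
          mul_le_mul_of_nonneg_left hjen (sq_nonneg c)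
      _ ≤ (Δt * M) ^ 2 * ∫ r in Icc (0:ℝ) 1, (deriv v (t - r * c)) ^ 2 :=
          mul_le_mul_of_nonneg_right hc2 hnnJ
  -- Fubini
  have hFcont : Continuous (fun p : ℝ × ℝ => (deriv v (p.1 - p.2 * (Δt * u p.1))) ^ 2) :=
    (hv'.comp (continuous_fst.sub (continuous_snd.mul
      (continuous_const.mul (hucont.comp continuous_fst))))).pow 2
  have hFint : Integrable
      (Function.uncurry fun t r => (deriv v (t - r * (Δt * u t))) ^ 2)
      ((volume.restrict (Icc a b)).prod (volume.restrict (Icc (0:ℝ) 1))) := by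
    rw [Measure.prod_restrict, ← Measure.volume_eq_prod]
    exact hFcont.continuousOn.integrableOn_compact (isCompact_Icc.prod isCompact_Icc)
  have hswap : ∫ t in Icc a b, ∫ r in Icc (0:ℝ) 1, (deriv v (t - r * (Δt * u t))) ^ 2
      = ∫ r in Icc (0:ℝ) 1, ∫ t in Icc a b, (deriv v (t - r * (Δt * u t))) ^ 2 :=
    integral_integral_swap hFint
  have hinner_int : Integrable
      (fun t => ∫ r in Icc (0:ℝ) 1, (deriv v (t - r * (Δt * u t))) ^ 2)
      (volume.restrict (Icc a b)) := hFint.integral_prod_left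
  have hS1 : S ≤ (Δt * M) ^ 2 *
      ∫ t in Icc a b, ∫ r in Icc (0:ℝ) 1, (deriv v (t - r * (Δt * u t))) ^ 2 := by
    rw [hSdef]
    calc ∫ t in Icc a b, (v (t - Δt * u t) - v t) ^ 2
        ≤ ∫ t in Icc a b, (Δt * M) ^ 2 *
            ∫ r in Icc (0:ℝ) 1, (deriv v (t - r * (Δt * u t))) ^ 2 :=
          setIntegral_mono_on
            ((((hvc.comp hXcont).sub hvc).pow 2).continuousOn.integrableOn_compact
              isCompact_Icc)
            (hinner_int.const_mul _) measurableSet_Icc hpt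
      _ = _ := integral_const_mul _ _
  have hperR : ∀ r ∈ Icc (0:ℝ) 1,
      ∫ t in Icc a b, (deriv v (t - r * (Δt * u t))) ^ 2 ≤ (4/3) * R := by
    intro r hr
    have hr1 : r * Δt ≤ Δt := by nlinarith [hr.2, hΔt.le]
    have hbound := (covle (r * Δt) (mul_nonneg hr.1 hΔt.le) hr1
      (fun y => (deriv v y) ^ 2) (hv'.measurable.pow_const 2)
      (fun y => sq_nonneg _) hdv2I).2
    calc ∫ t in Icc a b, (deriv v (t - r * (Δt * u t))) ^ 2
        = ∫ t in Icc a b, (deriv v (t - r * Δt * u t)) ^ 2 := by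
          congr 1; funext t; rw [mul_assoc]
      _ ≤ (4/3) * R := hbound
  have houter_int : Integrable
      (fun r => ∫ t in Icc a b, (deriv v (t - r * (Δt * u t))) ^ 2)
      (volume.restrict (Icc (0:ℝ) 1)) := hFint.swap.integral_prod_left
  have hS3 : ∫ r in Icc (0:ℝ) 1, ∫ t in Icc a b, (deriv v (t - r * (Δt * u t))) ^ 2
      ≤ (4/3) * R := by
    calc ∫ r in Icc (0:ℝ) 1, ∫ t in Icc a b, (deriv v (t - r * (Δt * u t))) ^ 2
        ≤ ∫ _ in Icc (0:ℝ) 1, (4/3) * R :=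
          setIntegral_mono_on houter_int
            ((integrableOn_const_iff (C := (4/3) * R)).mpr (Or.inr (by
              rw [Real.volume_Icc]; exact ENNReal.ofReal_lt_top)))
            measurableSet_Icc hperR
      _ = (4/3) * R := by simp [Real.volume_Icc]
  have hS : S ≤ (Δt * M) ^ 2 * ((4/3) * R) := by
    refine le_trans hS1 ?_
    rw [hswap]
    exact mul_le_mul_of_nonneg_left hS3 (sq_nonneg _)
  -- square-root estimates
  have h4 : ∀ x : ℝ, 0 ≤ x → Real.sqrt (4 * x) = 2 * Real.sqrt x := fun x hx => by
    rw [show (4:ℝ) * x = 2^2 * x by ring, Real.sqrt_mul (by positivity) x,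
      Real.sqrt_sq (by norm_num : (0:ℝ) ≤ 2)]
  have hsP : Real.sqrt Pc ≤ 2 * Real.sqrt P :=
    le_of_le_of_eq (Real.sqrt_le_sqrt (by linarith)) (h4 P hP0)
  have hsQ : Real.sqrt Qc ≤ 2 * Real.sqrt Q :=
    le_of_le_of_eq (Real.sqrt_le_sqrt (by linarith)) (h4 Q hQ0)
  have hsS : Real.sqrt S ≤ Δt * M * (2 * Real.sqrt R) := by
    have h1 : S ≤ (Δt*M)^2 * (4 * R) := by nlinarith [hS, sq_nonneg (Δt*M), hR0]
    calc Real.sqrt S ≤ Real.sqrt ((Δt*M)^2 * (4*R)) := Real.sqrt_le_sqrt h1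
      _ = Δt * M * (2 * Real.sqrt R) := by
          rw [Real.sqrt_mul (sq_nonneg _), Real.sqrt_sq (by positivity : (0:ℝ) ≤ Δt * M),
            h4 R hR0]
  -- final assembly
  have t1 : Real.sqrt Pc * Real.sqrt S
      ≤ (2*Real.sqrt P) * (Δt * M * (2*Real.sqrt R)) :=
    mul_le_mul hsP hsS (Real.sqrt_nonneg _) (by positivity)
  have t2 : (Δt * M) * (Real.sqrt Pc * Real.sqrt Qc)
      ≤ (Δt * M) * ((2*Real.sqrt P) * (2*Real.sqrt Q)) :=
    mul_le_mul_of_nonneg_left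
      (mul_le_mul hsP hsQ (Real.sqrt_nonneg _) (by positivity)) (by positivity)
  have e1 : (2*Real.sqrt P) * (Δt * M * (2*Real.sqrt R))
      = 4*(Δt*M)*(Real.sqrt P * Real.sqrt R) := by ring
  have e2 : (Δt * M) * ((2*Real.sqrt P) * (2*Real.sqrt Q))
      = 4*(Δt*M)*(Real.sqrt P * Real.sqrt Q) := by ring
  rw [e1] at t1
  rw [e2] at t2
  have expand : (4*M+1) * Δt * Real.sqrt P * (Real.sqrt Q + Real.sqrt R)
      = 4*(Δt*M)*(Real.sqrt P * Real.sqrt Q) + 4*(Δt*M)*(Real.sqrt P * Real.sqrt R)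
        + Δt*(Real.sqrt P * Real.sqrt Q) + Δt*(Real.sqrt P * Real.sqrt R) := by ring
  have n1 : 0 ≤ Δt*(Real.sqrt P * Real.sqrt Q) := by positivity
  have n2 : 0 ≤ Δt*(Real.sqrt P * Real.sqrt R) := by positivity
  refine le_trans hEbound ?_
  rw [expand]
  linarith [t1, t2, n1, n2]
end

section
/- Let a₀, a₁, a₂ be nonnegative real numbers with a₁ ≥ a₂, let Δt > 0 satisfy 4·a₀·Δt ≤ 3, and let (xₙ)_{n≥0}, (yₙ)_{n≥1}, (zₙ)_{n≥2}, (bₙ)_{n≥2} be sequences of nonnegative real numbers. Suppose that for all n ≥ 2: (1/Δt)·( (3/2)xₙ − 2xₙ₋₁ + (1/2)xₙ₋₂ + yₙ − yₙ₋₁ ) + zₙ ≤ a₀·xₙ + a₁·xₙ₋₁ + a₂·xₙ₋₂ + bₙ. Then for all n ≥ 2: xₙ + (2/3)yₙ + (2/3)·Δt·Σ_{i=2}^{n} z_i ≤ ( exp(2(a₀+a₁+a₂)·n·Δt) + 1 )·( x₀ + (3/2)x₁ + y₁ + Δt·Σ_{i=2}^{n} b_i ). -/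
set_option maxHeartbeats 1600000 in
/-- **Discrete Gronwall inequality for the two-step (BDF2) discretization.** -/
theorem discrete_gronwall_BDF2
    (a₀ a₁ a₂ Δt : ℝ) (x y z b : ℕ → ℝ)
    (ha₀ : 0 ≤ a₀) (ha₁ : 0 ≤ a₁) (ha₂ : 0 ≤ a₂) (ha₁₂ : a₂ ≤ a₁)
    (hΔt : 0 < Δt) (hΔt' : 4 * a₀ * Δt ≤ 3)
    (hx : ∀ n, 0 ≤ x n)
    (hy : ∀ n, 1 ≤ n → 0 ≤ y n)
    (hz : ∀ n, 2 ≤ n → 0 ≤ z n)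
    (hb : ∀ n, 2 ≤ n → 0 ≤ b n)
    (hrec : ∀ n, 2 ≤ n →
      (1 / Δt) * ((3 / 2) * x n - 2 * x (n - 1) + (1 / 2) * x (n - 2)
          + y n - y (n - 1)) + z n
        ≤ a₀ * x n + a₁ * x (n - 1) + a₂ * x (n - 2) + b n) :
    ∀ n, 2 ≤ n →
      x n + (2 / 3) * y n + (2 / 3) * Δt * ∑ i ∈ Finset.Icc 2 n, z i
        ≤ (Real.exp (2 * (a₀ + a₁ + a₂) * n * Δt) + 1)
            * (x 0 + (3 / 2) * x 1 + y 1 + Δt * ∑ i ∈ Finset.Icc 2 n, b i) := by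
  intro n hn
  set A : ℝ := a₀ + a₁ + a₂ with hA
  clear_value A
  have hA0 : 0 ≤ A := by rw [hA]; positivity
  have hΔ : (0:ℝ) ≤ Δt := hΔt.le
  have hu0 : 0 ≤ a₀ * Δt := mul_nonneg ha₀ hΔ
  have hu34 : a₀ * Δt ≤ 3/4 := by linarith
  -- key exponential inequality
  have hkey : 1 ≤ (1 - a₀ * Δt) * Real.exp (2 * (a₀ * Δt)) := by
    set s := a₀ * Δt with hs
    have hpoly : 1 + 2*s + 2*s^2 + (4/3)*s^3 ≤ Real.exp (2*s) := by
      have h := Real.sum_le_exp_of_nonneg (by linarith : (0:ℝ) ≤ 2*s) 4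
      simp [Finset.sum_range_succ, Nat.factorial] at h
      nlinarith [h]
    have h2 := mul_le_mul_of_nonneg_left hpoly (by linarith : (0:ℝ) ≤ 1 - s)
    nlinarith [mul_nonneg (mul_nonneg hu0 hu0) (by linarith : (0:ℝ) ≤ 3/4 - s),
      mul_nonneg (mul_nonneg (mul_nonneg hu0 hu0) hu0) (by linarith : (0:ℝ) ≤ 3/4 - s),
      mul_nonneg hu0 (by linarith : (0:ℝ) ≤ 3/4 - s)]
  -- multiplied recurrence
  have hrec' : ∀ m, 2 ≤ m →
      3/2 * x m - 2 * x (m-1) + 1/2 * x (m-2) + y m - y (m-1) + Δt * z m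
        ≤ Δt * (a₀ * x m + a₁ * x (m-1) + a₂ * x (m-2) + b m) := by
    intro m hm
    have h := mul_le_mul_of_nonneg_left (hrec m hm) hΔ
    have he : Δt * ((1 / Δt) * ((3/2) * x m - 2 * x (m-1) + (1/2) * x (m-2)
        + y m - y (m-1)) + z m)
        = 3/2 * x m - 2 * x (m-1) + 1/2 * x (m-2) + y m - y (m-1) + Δt * z m := by
      field_simp
    rw [he] at h
    linarith
  -- summed inequality
  have hP : ∀ m, 2 ≤ m →
      3/2 * x m - 1/2 * x (m-1) + y m + Δt * ∑ i ∈ Finset.Icc 2 m, z i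
        ≤ 3/2 * x 1 - 1/2 * x 0 + y 1 + Δt * ∑ i ∈ Finset.Icc 2 m, b i
          + a₀ * Δt * x m + (a₀ + a₁) * Δt * x (m-1)
          + A * Δt * ∑ i ∈ Finset.range (m-1), x i := by
    intro m hm
    induction m, hm using Nat.le_induction with
    | base =>
        have h := hrec' 2 le_rfl
        norm_num at h ⊢
        rw [hA]
        nlinarith [mul_nonneg (mul_nonneg ha₀ hΔ) (hx 1),
          mul_nonneg (mul_nonneg ha₀ hΔ) (hx 0),
          mul_nonneg (mul_nonneg ha₁ hΔ) (hx 0), hA]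
    | succ m hm ih =>
        obtain ⟨k, rfl⟩ : ∃ k, m = k + 2 := ⟨m - 2, by omega⟩
        have h := hrec' (k+3) (by omega)
        have e1 : k + 3 - 1 = k + 2 := rfl
        have e2 : k + 3 - 2 = k + 1 := rfl
        have e3 : k + 2 - 1 = k + 1 := rfl
        rw [e1, e2] at h
        rw [e3] at ih
        rw [Finset.sum_Icc_succ_top (by omega : 2 ≤ k + 3) z,
          Finset.sum_Icc_succ_top (by omega : 2 ≤ k + 3) b]
        simp only [Nat.add_sub_cancel]
        rw [Finset.sum_range_succ, show k + 2 + 1 = k + 3 by omega]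
        rw [hA] at ih ⊢
        linarith
  set S : ℝ := x 0 + 3 / 2 * x 1 + y 1 + Δt * ∑ i ∈ Finset.Icc 2 n, b i with hSdef
  clear_value S
  have hbs : (0:ℝ) ≤ ∑ i ∈ Finset.Icc 2 n, b i :=
    Finset.sum_nonneg fun i hi => hb i (Finset.mem_Icc.mp hi).1
  have hy1 := hy 1 le_rfl
  have hS0 : (0:ℝ) ≤ S := by
    rw [hSdef]; nlinarith [hx 0, hx 1, mul_nonneg hΔ hbs]
  have hbmono : ∀ m, m ≤ n → (∑ i ∈ Finset.Icc 2 m, b i) ≤ ∑ i ∈ Finset.Icc 2 n, b i :=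
    fun m hm => Finset.sum_le_sum_of_subset_of_nonneg
      (Finset.Icc_subset_Icc_right hm) (fun i hi _ => hb i (Finset.mem_Icc.mp hi).1)
  -- 1 ≤ (1-u) * exp(2 A M Δt) for M ≥ 1
  have hexp_ge : ∀ M : ℕ, 1 ≤ M → 1 ≤ (1 - a₀ * Δt) * Real.exp (2 * A * M * Δt) := by
    intro M hM
    have hM1 : (1:ℝ) ≤ M := by exact_mod_cast hM
    have t1 : 0 ≤ A * ((M:ℝ) - 1) * Δt := mul_nonneg (mul_nonneg hA0 (by linarith)) hΔ
    have t2 : 0 ≤ (A - a₀) * Δt := mul_nonneg (by rw [hA]; linarith) hΔ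
    have h1 : 2 * (a₀ * Δt) ≤ 2 * A * M * Δt := by nlinarith [t1, t2]
    have h2 := Real.exp_le_exp.mpr h1
    have h5 := mul_le_mul_of_nonneg_left h2 (show (0:ℝ) ≤ 1 - a₀ * Δt by linarith)
    linarith only [hkey, h5]
  -- decay: E_M ≤ (1-u) E_{M+1}
  have hdec : ∀ M : ℕ, Real.exp (2 * A * M * Δt)
      ≤ (1 - a₀ * Δt) * Real.exp (2 * A * (M + 1 : ℕ) * Δt) := by
    intro M
    have he : Real.exp (2 * A * ((M : ℝ) + 1) * Δt)
        = Real.exp (2 * A * M * Δt) * Real.exp (2 * A * Δt) := by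
      rw [← Real.exp_add]; ring_nf
    push_cast
    rw [he]
    have t2 : 0 ≤ (A - a₀) * Δt := mul_nonneg (by rw [hA]; linarith) hΔ
    have h1 : 2 * (a₀ * Δt) ≤ 2 * A * Δt := by nlinarith [t2]
    have h2 := Real.exp_le_exp.mpr h1
    have hEpos := Real.exp_pos (2 * A * (M : ℝ) * Δt)
    have h4 : 1 ≤ (1 - a₀ * Δt) * Real.exp (2 * A * Δt) := by
      have h5 := mul_le_mul_of_nonneg_left h2 (show (0:ℝ) ≤ 1 - a₀ * Δt by linarith)
      linarith only [hkey, h5]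
    linarith only [mul_le_mul_of_nonneg_left h4 hEpos.le]
  -- telescoping sum bound
  have hsumbound : ∀ M : ℕ, (∀ i, i < M → x i ≤ Real.exp (2 * A * i * Δt) * S) →
      A * Δt * ∑ i ∈ Finset.range M, x i
        ≤ (Real.exp (2 * A * M * Δt) - 1) / 2 * S := by
    intro M hM
    have hterm : ∀ i ∈ Finset.range M, A * Δt * x i
        ≤ (Real.exp (2 * A * (i + 1 : ℕ) * Δt) - Real.exp (2 * A * (i : ℕ) * Δt)) / 2 * S := by
      intro i hi
      have h1 := hM i (Finset.mem_range.mp hi)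
      have hEpos := Real.exp_pos (2 * A * (i : ℝ) * Δt)
      have he : Real.exp (2 * A * ((i : ℝ) + 1) * Δt)
          = Real.exp (2 * A * i * Δt) * Real.exp (2 * A * Δt) := by
        rw [← Real.exp_add]; ring_nf
      have h2 := Real.add_one_le_exp (2 * A * Δt)
      have hAD : 0 ≤ A * Δt := mul_nonneg hA0 hΔ
      push_cast
      rw [he]
      linarith only [mul_le_mul_of_nonneg_left h1 hAD,
        mul_le_mul_of_nonneg_right (mul_le_mul_of_nonneg_left
          (show 2 * A * Δt ≤ Real.exp (2 * A * Δt) - 1 by linarith) hEpos.le) hS0]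
    calc A * Δt * ∑ i ∈ Finset.range M, x i
        = ∑ i ∈ Finset.range M, A * Δt * x i := by rw [Finset.mul_sum]
      _ ≤ ∑ i ∈ Finset.range M, (Real.exp (2 * A * (i + 1 : ℕ) * Δt)
            - Real.exp (2 * A * (i : ℕ) * Δt)) / 2 * S := Finset.sum_le_sum hterm
      _ = (∑ i ∈ Finset.range M, (Real.exp (2 * A * (i + 1 : ℕ) * Δt)
            - Real.exp (2 * A * (i : ℕ) * Δt))) / 2 * S := by
          rw [Finset.sum_div, Finset.sum_mul]
      _ = (Real.exp (2 * A * M * Δt) - 1) / 2 * S := by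
          rw [Finset.sum_range_sub (fun j : ℕ => Real.exp (2 * A * (j : ℕ) * Δt))]
          norm_num
  -- the pointwise exponential bound
  have hQ : ∀ m : ℕ, m ≤ n → x m ≤ Real.exp (2 * A * m * Δt) * S := by
    intro m
    induction m using Nat.strong_induction_on with
    | _ m ih =>
      intro hmn
      rcases m with _ | _ | k
      · have e : 2 * A * ((0:ℕ):ℝ) * Δt = 0 := by norm_num
        rw [e, Real.exp_zero, one_mul, hSdef]
        nlinarith [hx 1, mul_nonneg hΔ hbs]
      · have h1 : 1 ≤ Real.exp (2 * A * ((1:ℕ):ℝ) * Δt) :=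
          Real.one_le_exp (by push_cast; nlinarith [mul_nonneg hA0 hΔ])
        have hx1S : x 1 ≤ S := by rw [hSdef]; nlinarith [hx 0, mul_nonneg hΔ hbs]
        nlinarith [hS0]
      · have hp := hP (k + 2) (by omega)
        rw [show k + 2 - 1 = k + 1 from rfl] at hp
        have hmerge : (a₀ + a₁) * Δt * x (k + 1)
            + A * Δt * ∑ i ∈ Finset.range (k + 1), x i
            ≤ A * Δt * ∑ i ∈ Finset.range (k + 2), x i := by
          rw [hA]
          conv_rhs => rw [Finset.sum_range_succ]
          nlinarith [mul_nonneg (mul_nonneg ha₂ hΔ) (hx (k + 1))]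
        have hsum := hsumbound (k + 2) (fun i hi => ih i hi (by omega))
        have hxk1 : x (k + 1) ≤ (1 - a₀ * Δt) * (Real.exp (2 * A * ((k + 2 : ℕ) : ℝ) * Δt) * S) := by
          have h1 := ih (k + 1) (by omega) (by omega)
          have h2 := hdec (k + 1)
          rw [show k + 1 + 1 = k + 2 from rfl] at h2
          nlinarith [hS0, mul_le_mul_of_nonneg_right h2 hS0]
        have hSP : S ≤ (1 - a₀ * Δt) * (Real.exp (2 * A * ((k + 2 : ℕ) : ℝ) * Δt) * S) := by
          nlinarith [mul_le_mul_of_nonneg_right (hexp_ge (k + 2) (by omega)) hS0]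
        have hy2 := hy (k + 2) (by omega)
        have hW : 0 ≤ Δt * ∑ i ∈ Finset.Icc 2 (k + 2), z i :=
          mul_nonneg hΔ (Finset.sum_nonneg fun i hi => hz i (Finset.mem_Icc.mp hi).1)
        have hbm := mul_le_mul_of_nonneg_left (hbmono (k + 2) (by omega)) hΔ
        have hpos : (0:ℝ) < 3 / 2 - a₀ * Δt := by linarith
        have hfin : (3 / 2 - a₀ * Δt) * x (k + 2)
            ≤ (3 / 2 - a₀ * Δt) * (Real.exp (2 * A * ((k + 2 : ℕ) : ℝ) * Δt) * S) := by
          linarith only [hp, hmerge, hsum, hxk1, hy2, hW, hSP, hbm, hS0, hx 0,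
            hSdef.le, hSdef.symm.le]
        exact le_of_mul_le_mul_left hfin hpos
  -- final assembly
  obtain ⟨j, rfl⟩ : ∃ j, n = j + 2 := ⟨n - 2, by omega⟩
  have hp := hP (j + 2) (by omega)
  rw [show j + 2 - 1 = j + 1 from rfl] at hp
  have hmerge : (a₀ + a₁) * Δt * x (j + 1)
      + A * Δt * ∑ i ∈ Finset.range (j + 1), x i
      ≤ A * Δt * ∑ i ∈ Finset.range (j + 2), x i := by
    rw [hA]
    conv_rhs => rw [Finset.sum_range_succ]
    nlinarith [mul_nonneg (mul_nonneg ha₂ hΔ) (hx (j + 1))]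
  have hsum := hsumbound (j + 2) (fun i hi => hQ i (by omega))
  have hxk1 : x (j + 1) ≤ (1 - a₀ * Δt) * (Real.exp (2 * A * ((j + 2 : ℕ) : ℝ) * Δt) * S) := by
    have h1 := hQ (j + 1) (by omega)
    have h2 := hdec (j + 1)
    rw [show j + 1 + 1 = j + 2 from rfl] at h2
    nlinarith [hS0, mul_le_mul_of_nonneg_right h2 hS0]
  have hxn := hQ (j + 2) le_rfl
  have hES0 : (0:ℝ) ≤ Real.exp (2 * A * ((j + 2 : ℕ) : ℝ) * Δt) * S :=
    mul_nonneg (Real.exp_pos _).le hS0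
  have huX : a₀ * Δt * x (j + 2)
      ≤ a₀ * Δt * (Real.exp (2 * A * ((j + 2 : ℕ) : ℝ) * Δt) * S) :=
    mul_le_mul_of_nonneg_left hxn hu0
  have hT : a₀ * Δt * (Real.exp (2 * A * ((j + 2 : ℕ) : ℝ) * Δt) * S)
      ≤ 3 / 4 * (Real.exp (2 * A * ((j + 2 : ℕ) : ℝ) * Δt) * S) :=
    mul_le_mul_of_nonneg_right hu34 hES0
  have hy2 := hy (j + 2) (by omega)
  have hW : 0 ≤ Δt * ∑ i ∈ Finset.Icc 2 (j + 2), z i :=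
    mul_nonneg hΔ (Finset.sum_nonneg fun i hi => hz i (Finset.mem_Icc.mp hi).1)
  linarith only [hp, hmerge, hsum, hxk1, huX, hT, hy2, hW, hS0, hES0, hx 0,
    hSdef.le, hSdef.symm.le]
end

section
/- Let a<b, Δt>0 and L≥0 with Δt·L ≤ 1/8. Let u:[a,b]→ℝ be differentiable with u(a)=u(b)=0 and |u'(x)| ≤ L for all x∈[a,b]. Define X(x)=x−Δt·u(x), γ(x)=1−Δt·u'(x), X̃(x)=x−2Δt·u(x), γ̃(x)=1−2Δt·u'(x). Then for every Lebesgue-integrable ρ:[a,b]→ℝ: ∫_a^b ρ(X(x))·γ(x) dx = ∫_a^b ρ(y) dy and ∫_a^b ρ(X̃(x))·γ̃(x) dx = ∫_a^b ρ(y) dy. -/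
open MeasureTheory

lemma upwind_cov_aux
    (a b s L : ℝ) (hab : a < b) (hs : 0 < s) (hL : 0 ≤ L) (hsL : s * L ≤ 1 / 4)
    (u : ℝ → ℝ) (hu : Differentiable ℝ u) (hua : u a = 0) (hub : u b = 0)
    (hu' : ∀ x ∈ Set.Icc a b, |deriv u x| ≤ L)
    (ρ : ℝ → ℝ) :
    (∫ x in a..b, ρ (x - s * u x) * (1 - s * deriv u x)) = (∫ y in a..b, ρ y) := by
  set f : ℝ → ℝ := fun x => x - s * u x with hf
  set f' : ℝ → ℝ := fun x => 1 - s * deriv u x with hf'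
  have hder : ∀ x, HasDerivAt f (f' x) x := by
    intro x
    exact (hasDerivAt_id' x).sub (((hu x).hasDerivAt).const_mul s)
  have hfc : Continuous f := continuous_id.sub (continuous_const.mul hu.continuous)
  have hpos : ∀ x ∈ Set.Icc a b, 0 < f' x := by
    intro x hx
    have h1 : |s * deriv u x| ≤ 1/4 := by
      rw [abs_mul, abs_of_pos hs]
      calc s * |deriv u x| ≤ s * L := by
            exact mul_le_mul_of_nonneg_left (hu' x hx) hs.le
        _ ≤ 1/4 := hsL
    have := (abs_le.mp h1).2
    simp only [hf']
    linarith
  have hmono : StrictMonoOn f (Set.Icc a b) := by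
    apply strictMonoOn_of_deriv_pos (convex_Icc a b) hfc.continuousOn
    intro x hx
    rw [interior_Icc] at hx
    rw [(hder x).deriv]
    exact hpos x (Set.Ioo_subset_Icc_self hx)
  have hfa : f a = a := by simp [hf, hua]
  have hfb : f b = b := by simp [hf, hub]
  have himg : f '' Set.Icc a b = Set.Icc a b := by
    apply Set.Subset.antisymm
    · rintro y ⟨x, hx, rfl⟩
      constructor
      · rw [← hfa]
        rcases eq_or_lt_of_le hx.1 with h | h
        · rw [h]
        · exact (hmono (Set.left_mem_Icc.mpr hab.le) hx h).le
      · rw [← hfb]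
        rcases eq_or_lt_of_le hx.2 with h | h
        · rw [h]
        · exact (hmono hx (Set.right_mem_Icc.mpr hab.le) h).le
    · intro y hy
      have := intermediate_value_Icc hab.le hfc.continuousOn
      rw [hfa, hfb] at this
      exact this hy
  have hinj : Set.InjOn f (Set.Icc a b) := hmono.injOn
  have key := integral_image_eq_integral_abs_deriv_smul measurableSet_Icc
      (fun x _ => (hder x).hasDerivWithinAt) hinj ρ
  rw [himg] at key
  have hcongr : ∀ x ∈ Set.Icc a b, |f' x| • ρ (f x) = ρ (x - s * u x) * (1 - s * deriv u x) := by
    intro x hx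
    rw [abs_of_pos (hpos x hx)]
    simp [hf, hf', mul_comm]
  rw [setIntegral_congr_fun measurableSet_Icc hcongr] at key
  rw [intervalIntegral.integral_of_le hab.le, intervalIntegral.integral_of_le hab.le,
    ← integral_Icc_eq_integral_Ioc, ← integral_Icc_eq_integral_Ioc, key]

/-- **Change-of-variables identity for the upwind maps.**  Under `Δt·L ≤ 1/8`,
`|u'| ≤ L` on `[a,b]` and `u(a) = u(b) = 0`, integration of `ρ∘X · γ` (resp.
`ρ∘X̃ · γ̃`) over `(a,b)` returns the integral of `ρ`, where `X(x) = x − Δt·u(x)`,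
`γ = 1 − Δt·u'`, `X̃(x) = x − 2Δt·u(x)`, `γ̃ = 1 − 2Δt·u'`. -/
theorem upwind_change_of_variables
    (a b Δt L : ℝ) (hab : a < b) (hΔt : 0 < Δt) (hL : 0 ≤ L) (hΔtL : Δt * L ≤ 1 / 8)
    (u : ℝ → ℝ) (hu : Differentiable ℝ u) (hua : u a = 0) (hub : u b = 0)
    (hu' : ∀ x ∈ Set.Icc a b, |deriv u x| ≤ L)
    (ρ : ℝ → ℝ) (hρ : IntervalIntegrable ρ volume a b) :
    (∫ x in a..b, ρ (x - Δt * u x) * (1 - Δt * deriv u x)) = (∫ y in a..b, ρ y) ∧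
    (∫ x in a..b, ρ (x - 2 * Δt * u x) * (1 - 2 * Δt * deriv u x)) = ∫ y in a..b, ρ y := by
  constructor
  · exact upwind_cov_aux a b Δt L hab hΔt hL (by linarith) u hu hua hub hu' ρ
  · exact upwind_cov_aux a b (2 * Δt) L hab (by linarith) hL (by linarith) u hu hua hub hu' ρ
end

section
/- Let φ:ℝ×ℝ→ℝ be three times continuously differentiable, let u∈ℝ, Δt>0 and (x,t)∈ℝ². Write Dφ := ∂_tφ + u·∂_xφ, D³φ := D(D(Dφ)), and for s∈ℝ set y(s) := x − u·(1−s)·Δt and τ(s) := t − (1−s)·Δt. Then ( 3φ(x,t) − 4φ(x−uΔt, t−Δt) + φ(x−2uΔt, t−2Δt) )/(2Δt) − ( ∂_tφ(x,t) + u·∂_xφ(x,t) ) = −2·Δt² · ∫₀¹ s · ∫_{2s−1}^{s} (D³φ)( y(s₁), τ(s₁) ) ds₁ ds. -/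
open MeasureTheory

/-- Partial derivative in the first (spatial) variable. -/
noncomputable def pdx (F : ℝ → ℝ → ℝ) : ℝ → ℝ → ℝ := fun x t => deriv (fun y => F y t) x

/-- Partial derivative in the second (temporal) variable. -/
noncomputable def pdt (F : ℝ → ℝ → ℝ) : ℝ → ℝ → ℝ := fun x t => deriv (fun s => F x s) t

/-- Material (directional) derivative `D = ∂_t + u·∂_x` along the characteristic. -/
noncomputable def Dop (u : ℝ) (F : ℝ → ℝ → ℝ) : ℝ → ℝ → ℝ :=
  fun x t => pdt F x t + u * pdx F x t

private lemma Dop_eq_fderiv (F : ℝ → ℝ → ℝ)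
    (hF : Differentiable ℝ fun p : ℝ × ℝ => F p.1 p.2) (u x t : ℝ) :
    Dop u F x t = fderiv ℝ (fun p : ℝ × ℝ => F p.1 p.2) (x, t) (u, 1) := by
  have hx : HasDerivAt (fun y : ℝ => F y t)
      (fderiv ℝ (fun p : ℝ × ℝ => F p.1 p.2) (x, t) ((1 : ℝ), (0 : ℝ))) x := by
    have hl : HasDerivAt (fun y : ℝ => ((y, t) : ℝ × ℝ)) ((1 : ℝ), (0 : ℝ)) x :=
      (hasDerivAt_id x).prodMk (hasDerivAt_const x t)
    exact (hF (x, t)).hasFDerivAt.comp_hasDerivAt x hl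
  have ht : HasDerivAt (fun s : ℝ => F x s)
      (fderiv ℝ (fun p : ℝ × ℝ => F p.1 p.2) (x, t) ((0 : ℝ), (1 : ℝ))) t := by
    have hl : HasDerivAt (fun s : ℝ => ((x, s) : ℝ × ℝ)) ((0 : ℝ), (1 : ℝ)) t :=
      (hasDerivAt_const t x).prodMk (hasDerivAt_id t)
    exact (hF (x, t)).hasFDerivAt.comp_hasDerivAt t hl
  have h2 : ((u, 1) : ℝ × ℝ) = u • ((1 : ℝ), (0 : ℝ)) + ((0 : ℝ), (1 : ℝ)) := by
    simp [Prod.ext_iff]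
  simp only [Dop, pdx, pdt, hx.deriv, ht.deriv, h2, map_add, _root_.map_smul, smul_eq_mul]
  ring

private lemma contDiff_Dop {n : WithTop ℕ∞} (F : ℝ → ℝ → ℝ) (u : ℝ)
    (hF : ContDiff ℝ (n + 1) fun p : ℝ × ℝ => F p.1 p.2) :
    ContDiff ℝ n fun p : ℝ × ℝ => Dop u F p.1 p.2 := by
  have hd : Differentiable ℝ fun p : ℝ × ℝ => F p.1 p.2 := hF.differentiable (by simp)
  have he : (fun p : ℝ × ℝ => Dop u F p.1 p.2)
      = fun p : ℝ × ℝ => fderiv ℝ (fun p : ℝ × ℝ => F p.1 p.2) p ((u, 1) : ℝ × ℝ) := by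
    funext p
    exact Dop_eq_fderiv F hd u p.1 p.2
  rw [he]
  exact (hF.fderiv_right le_rfl).clm_apply contDiff_const

private lemma hasDerivAt_along (F : ℝ → ℝ → ℝ)
    (hF : Differentiable ℝ fun p : ℝ × ℝ => F p.1 p.2) (u Δt x t s : ℝ) :
    HasDerivAt (fun s => F (x - u * (1 - s) * Δt) (t - (1 - s) * Δt))
      (Δt * Dop u F (x - u * (1 - s) * Δt) (t - (1 - s) * Δt)) s := by
  have h1 : HasDerivAt (fun s : ℝ => x - u * (1 - s) * Δt) (u * Δt) s := by
    have he : (fun s : ℝ => x - u * (1 - s) * Δt) = fun s => (u * Δt) * s + (x - u * Δt) := by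
      funext s; ring
    rw [he]
    simpa using ((hasDerivAt_id s).const_mul (u * Δt)).add_const (x - u * Δt)
  have h2 : HasDerivAt (fun s : ℝ => t - (1 - s) * Δt) Δt s := by
    have he : (fun s : ℝ => t - (1 - s) * Δt) = fun s => Δt * s + (t - Δt) := by
      funext s; ring
    rw [he]
    simpa using ((hasDerivAt_id s).const_mul Δt).add_const (t - Δt)
  have hline := h1.prodMk h2
  have hc := (hF _).hasFDerivAt.comp_hasDerivAt s hline
  have hv : ((u * Δt, Δt) : ℝ × ℝ) = Δt • ((u, 1) : ℝ × ℝ) := by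
    simp [Prod.ext_iff, mul_comm]
  rw [hv, _root_.map_smul, smul_eq_mul,
    ← Dop_eq_fderiv F hF u (x - u * (1 - s) * Δt) (t - (1 - s) * Δt)] at hc
  exact hc

private lemma key (c : ℝ) (hc : c ≠ 0) (g g1 g2 g3 : ℝ → ℝ)
    (h1 : ∀ s, HasDerivAt g (c * g1 s) s)
    (h2 : ∀ s, HasDerivAt g1 (c * g2 s) s)
    (h3 : ∀ s, HasDerivAt g2 (c * g3 s) s)
    (hg2 : Continuous g2) (hg3 : Continuous g3) :
    (∫ s in (0:ℝ)..1, s * ∫ s₁ in (2*s-1)..s, g3 s₁)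
      = c⁻¹^3 * ((1/2)*c*g1 1 - (3/4)*g 1 + g 0 - (1/4)*g (-1)) := by
  have inner : ∀ s : ℝ, (∫ s₁ in (2*s-1)..s, g3 s₁) = c⁻¹ * (g2 s - g2 (2*s-1)) := by
    intro s
    have hI : (∫ s₁ in (2*s-1)..s, c * g3 s₁) = g2 s - g2 (2*s-1) :=
      intervalIntegral.integral_eq_sub_of_hasDerivAt (fun r _ => h3 r)
        ((continuous_const.mul hg3).intervalIntegrable _ _)
    rw [intervalIntegral.integral_const_mul] at hI
    rw [eq_inv_mul_iff_mul_eq₀ hc]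
    exact hI
  have houter : (∫ s in (0:ℝ)..1, s * ∫ s₁ in (2*s-1)..s, g3 s₁)
      = ∫ s in (0:ℝ)..1, c⁻¹ * (s * (g2 s - g2 (2*s-1))) := by
    refine intervalIntegral.integral_congr fun s _ => ?_
    rw [inner s]; ring
  rw [houter, intervalIntegral.integral_const_mul]
  set A : ℝ → ℝ := fun s =>
    c⁻¹ * (s * g1 s) - c⁻¹ * c⁻¹ * g s
      - ((1/2) * c⁻¹ * (s * g1 (2*s-1)) - (1/4) * (c⁻¹ * c⁻¹) * g (2*s-1)) with hA
  have hAd : ∀ s : ℝ, HasDerivAt A (s * (g2 s - g2 (2*s-1))) s := by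
    intro s
    have hr : HasDerivAt (fun s : ℝ => 2*s-1) 2 s := by
      simpa using ((hasDerivAt_id s).const_mul (2:ℝ)).sub_const 1
    have e1 : HasDerivAt (fun s : ℝ => s * g1 s) (1 * g1 s + s * (c * g2 s)) s :=
      (hasDerivAt_id s).mul (h2 s)
    have e2 : HasDerivAt (fun s : ℝ => g (2*s-1)) (c * g1 (2*s-1) * 2) s :=
      (h1 (2*s-1)).comp s hr
    have e3 : HasDerivAt (fun s : ℝ => s * g1 (2*s-1))
        (1 * g1 (2*s-1) + s * (c * g2 (2*s-1) * 2)) s :=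
      (hasDerivAt_id s).mul ((h2 (2*s-1)).comp s hr)
    have hall := ((e1.const_mul c⁻¹).sub ((h1 s).const_mul (c⁻¹ * c⁻¹))).sub
      ((e3.const_mul ((1/2) * c⁻¹)).sub (e2.const_mul ((1/4) * (c⁻¹ * c⁻¹))))
    refine hall.congr_deriv ?_
    field_simp
    ring
  have hint : IntervalIntegrable (fun s : ℝ => s * (g2 s - g2 (2*s-1))) volume 0 1 := by
    apply Continuous.intervalIntegrable
    fun_prop
  rw [intervalIntegral.integral_eq_sub_of_hasDerivAt (fun s _ => hAd s) hint]
  simp only [hA]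
  field_simp
  ring

/-- **Truncation error of the two-step (BDF2-type) backward characteristic difference
quotient.**  With `y(s) = x − u(1−s)Δt`, `τ(s) = t − (1−s)Δt` and `D³φ = D(D(Dφ))`,
for `φ ∈ C³`:
`(3φ(x,t) − 4φ(x−uΔt,t−Δt) + φ(x−2uΔt,t−2Δt))/(2Δt) − (∂_tφ + u∂_xφ)(x,t)
  = −2Δt² ∫₀¹ s ∫_{2s−1}^{s} D³φ(y(s₁), τ(s₁)) ds₁ ds`. -/
theorem characteristic_difference_second_order
    (φ : ℝ → ℝ → ℝ) (hφ : ContDiff ℝ 3 fun p : ℝ × ℝ => φ p.1 p.2)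
    (u Δt x t : ℝ) (hΔt : 0 < Δt) :
    (3 * φ x t - 4 * φ (x - u * Δt) (t - Δt) + φ (x - 2 * u * Δt) (t - 2 * Δt)) / (2 * Δt)
        - (pdt φ x t + u * pdx φ x t)
      = -2 * Δt ^ 2 * ∫ s in (0:ℝ)..1, s * ∫ s₁ in (2 * s - 1)..s,
          Dop u (Dop u (Dop u φ)) (x - u * (1 - s₁) * Δt) (t - (1 - s₁) * Δt) := by
  have hφ' : ContDiff ℝ (2 + 1) fun p : ℝ × ℝ => φ p.1 p.2 := by
    rwa [show ((2:WithTop ℕ∞) + 1) = 3 by norm_num]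
  have hφ1 : ContDiff ℝ 2 fun p : ℝ × ℝ => Dop u φ p.1 p.2 := contDiff_Dop φ u hφ'
  have hφ1' : ContDiff ℝ (1 + 1) fun p : ℝ × ℝ => Dop u φ p.1 p.2 := by
    rwa [show ((1:WithTop ℕ∞) + 1) = 2 by norm_num]
  have hφ2 : ContDiff ℝ 1 fun p : ℝ × ℝ => Dop u (Dop u φ) p.1 p.2 :=
    contDiff_Dop (Dop u φ) u hφ1'
  have hφ2' : ContDiff ℝ (0 + 1) fun p : ℝ × ℝ => Dop u (Dop u φ) p.1 p.2 := by
    rwa [show ((0:WithTop ℕ∞) + 1) = 1 by norm_num]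
  have hφ3 : ContDiff ℝ 0 fun p : ℝ × ℝ => Dop u (Dop u (Dop u φ)) p.1 p.2 :=
    contDiff_Dop (Dop u (Dop u φ)) u hφ2'
  have hd0 : Differentiable ℝ fun p : ℝ × ℝ => φ p.1 p.2 := hφ'.differentiable (by simp)
  have hd1 : Differentiable ℝ fun p : ℝ × ℝ => Dop u φ p.1 p.2 :=
    hφ1'.differentiable (by simp)
  have hd2 : Differentiable ℝ fun p : ℝ × ℝ => Dop u (Dop u φ) p.1 p.2 :=
    hφ2'.differentiable (by simp)
  have hlc : Continuous fun s : ℝ => ((x - u * (1 - s) * Δt, t - (1 - s) * Δt) : ℝ × ℝ) := by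
    fun_prop
  have hc2 : Continuous fun s : ℝ =>
      Dop u (Dop u φ) (x - u * (1 - s) * Δt) (t - (1 - s) * Δt) := hφ2.continuous.comp hlc
  have hc3 : Continuous fun s : ℝ =>
      Dop u (Dop u (Dop u φ)) (x - u * (1 - s) * Δt) (t - (1 - s) * Δt) :=
    hφ3.continuous.comp hlc
  have hkey := key Δt hΔt.ne'
    (fun s => φ (x - u * (1 - s) * Δt) (t - (1 - s) * Δt))
    (fun s => Dop u φ (x - u * (1 - s) * Δt) (t - (1 - s) * Δt))
    (fun s => Dop u (Dop u φ) (x - u * (1 - s) * Δt) (t - (1 - s) * Δt))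
    (fun s => Dop u (Dop u (Dop u φ)) (x - u * (1 - s) * Δt) (t - (1 - s) * Δt))
    (fun s => hasDerivAt_along φ hd0 u Δt x t s)
    (fun s => hasDerivAt_along (Dop u φ) hd1 u Δt x t s)
    (fun s => hasDerivAt_along (Dop u (Dop u φ)) hd2 u Δt x t s)
    hc2 hc3
  rw [hkey]
  have hne : Δt ≠ 0 := hΔt.ne'
  have e1 : x - u * (1 - 1) * Δt = x := by ring
  have e2 : t - (1 - 1) * Δt = t := by ring
  have e3 : x - u * (1 - 0) * Δt = x - u * Δt := by ring
  have e4 : t - (1 - 0) * Δt = t - Δt := by ring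
  have e5 : x - u * (1 - (-1)) * Δt = x - 2 * u * Δt := by ring
  have e6 : t - (1 - (-1)) * Δt = t - 2 * Δt := by ring
  simp only [e1, e2, e3, e4, e5, e6]
  simp only [Dop]
  field_simp
  ring
end
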